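/- arXiv:0910.1610 — 4 statements merged into one kernel-verified Lean document; each statement's English description precedes it below -/
import Mathlib

section
/- Let Δ be a simplicial complex on [n] with all d_i ≥ 2, and let k = init(I_Δ) be the smallest cardinality of a non-face of Δ. Then the initial degree of the toric ideal I_{M(Δ,d)} (the smallest degree of a minimal generator, equivalently the smallest degree of a nonzero binomial in I_M) equals 2^{k−1}. -/
open Finset

open scoped Classical

/-- An (abstract) simplicial complex on the vertex set `[n] = Fin n`:
a downward-closed collection of finite subsets containing the empty set. -/
structure SC (n : ℕ) where
  faces : Finset (Finset (Fin n))
  down : ∀ F ∈ faces, ∀ G : Finset (Fin n), G ⊆ F → G ∈ faces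
  empty_mem : (∅ : Finset (Fin n)) ∈ faces

namespace SC

variable {n : ℕ}

/-- `F` is a facet (inclusion-maximal face) of `Δ`. -/
def isFacet (Δ : SC n) (F : Finset (Fin n)) : Prop :=
  F ∈ Δ.faces ∧ ∀ G ∈ Δ.faces, F ⊆ G → F = G

/-- The dimension of `Δ` (as an integer, so that `dim {∅} = -1`). -/
def dim (Δ : SC n) : ℤ :=
  ((Δ.faces.sup Finset.card : ℕ) : ℤ) - 1

/-- `Δ` is pure: all facets have the same cardinality (hence dimension). -/
def Pure (Δ : SC n) : Prop :=
  ∀ F G : Finset (Fin n), Δ.isFacet F → Δ.isFacet G → F.card = G.card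

/-- The deletion `Δ_{-v}` of the vertex `v`. -/
noncomputable def del (Δ : SC n) (v : Fin n) : SC n where
  faces := Δ.faces.filter (fun F => v ∉ F)
  down := by
    intro F hF G hG
    simp only [Finset.mem_filter] at *
    exact ⟨Δ.down F hF.1 G hG, fun hv => hF.2 (hG hv)⟩
  empty_mem := by simp [Δ.empty_mem]

/-- The link `link_Δ(v)` of the vertex `v`. -/
noncomputable def link (Δ : SC n) (v : Fin n) : SC n where
  faces := insert ∅ (Δ.faces.filter (fun F => v ∉ F ∧ insert v F ∈ Δ.faces))
  down := by
    intro F hF G hG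
    simp only [Finset.mem_insert, Finset.mem_filter] at *
    rcases hF with h | ⟨h1, h2, h3⟩
    · left; subst h; exact Finset.subset_empty.mp hG
    · right
      exact ⟨Δ.down F h1 G hG, fun hv => h2 (hG hv),
        Δ.down _ h3 _ (Finset.insert_subset_insert v hG)⟩
  empty_mem := by simp

/-- The link `link_Δ(S)` of a face `S`. -/
noncomputable def linkF (Δ : SC n) (S : Finset (Fin n)) : SC n where
  faces := insert ∅ (Δ.faces.filter (fun G => G ∩ S = ∅ ∧ G ∪ S ∈ Δ.faces))
  down := by
    intro F hF G hG
    simp only [Finset.mem_insert, Finset.mem_filter] at *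
    rcases hF with h | ⟨h1, h2, h3⟩
    · left; subst h; exact Finset.subset_empty.mp hG
    · right
      refine ⟨Δ.down F h1 G hG, ?_, Δ.down _ h3 _ (Finset.union_subset_union_left hG)⟩
      apply Finset.eq_empty_of_forall_notMem
      intro x hx
      simp only [Finset.mem_inter] at hx
      have : x ∈ F ∩ S := Finset.mem_inter.mpr ⟨hG hx.1, hx.2⟩
      simp [h2] at this
  empty_mem := by simp

/-- The restriction `Δ|_σ`. -/
noncomputable def restrict (Δ : SC n) (σ : Finset (Fin n)) : SC n where
  faces := Δ.faces.filter (fun F => F ⊆ σ)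
  down := by
    intro F hF G hG
    simp only [Finset.mem_filter] at *
    exact ⟨Δ.down F hF.1 G hG, hG.trans hF.2⟩
  empty_mem := by simp [Δ.empty_mem]

/-- The subcomplex `Δ_{⟨-v⟩}` generated by the facets of `Δ` not containing `v`. -/
noncomputable def genDel (Δ : SC n) (v : Fin n) : SC n where
  faces := insert ∅ (Δ.faces.filter (fun G => ∃ F ∈ Δ.faces, Δ.isFacet F ∧ v ∉ F ∧ G ⊆ F))
  down := by
    intro F hF G hG
    simp only [Finset.mem_insert, Finset.mem_filter] at *
    rcases hF with h | ⟨h1, F', hF'⟩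
    · left; subst h; exact Finset.subset_empty.mp hG
    · right
      exact ⟨Δ.down F h1 G hG, F', hF'.1, hF'.2.1, hF'.2.2.1, hG.trans hF'.2.2.2⟩
  empty_mem := by simp

/-- `Δ` is a cone with apex `v`: every facet contains `v`. -/
def IsCone (Δ : SC n) (v : Fin n) : Prop :=
  ∀ F, Δ.isFacet F → v ∈ F

end SC

section Margins

variable {n : ℕ}

/-- The `F`-margin of a table `T`, evaluated at the assignment `a` on `F`:
the sum of the entries of `T` over all cells agreeing with `a` on `F`. -/
def margin {R : Type*} [AddCommMonoid R] (d : Fin n → ℕ) (T : (∀ j, Fin (d j)) → R)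
    (F : Finset (Fin n)) (a : ∀ j, Fin (d j)) : R :=
  ∑ b ∈ Finset.univ.filter (fun b : ∀ j, Fin (d j) => ∀ j ∈ F, b j = a j), T b

/-- `T` lies in the kernel of the marginal (design) matrix `M(Δ,d)` of the
hierarchical model: all margins along facets of `Δ` vanish. -/
def inKer {R : Type*} [AddCommMonoid R] (Δ : SC n) (d : Fin n → ℕ)
    (T : (∀ j, Fin (d j)) → R) : Prop :=
  ∀ F : Finset (Fin n), Δ.isFacet F → ∀ a, margin d T F a = 0

end Margins
section Cohomology

variable {n : ℕ}

/-- Reduced simplicial cochains "of size `s`" (i.e. cohomological degree `s-1`):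
functions on the faces of `Δ` with `s` vertices, with values in `K`.
For `s = 0` this is the span of the empty face. -/
abbrev Cch (Δ : SC n) (K : Type) [Field K] (s : ℕ) : Type :=
  {F : Finset (Fin n) // F ∈ Δ.faces ∧ F.card = s} → K

/-- The simplicial coboundary map from cochains of size `s` (degree `s-1`)
to cochains of size `s+1` (degree `s`), with the usual signs. -/
noncomputable def deltaLin (Δ : SC n) (K : Type) [Field K] (s : ℕ) :
    Cch Δ K s →ₗ[K] Cch Δ K (s + 1) where
  toFun φ := fun F => ∑ v ∈ F.1.attach,
    ((-1 : K) ^ ((F.1.filter (fun w => w < v.1)).card)) *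
      φ ⟨F.1.erase v.1,
        ⟨Δ.down F.1 F.2.1 _ (Finset.erase_subset _ _), by
          simp [Finset.card_erase_of_mem v.2, F.2.2]⟩⟩
  map_add' φ ψ := by
    funext F
    simp only [Pi.add_apply, mul_add, Finset.sum_add_distrib]
  map_smul' c φ := by
    funext F
    simp only [Pi.smul_apply, smul_eq_mul, RingHom.id_apply, Finset.mul_sum]
    exact Finset.sum_congr rfl (fun v _ => by ring)

/-- The reduced simplicial cohomology `H̃^j(Δ; K)` (for `j ≥ 0`) is nonzero:
there is a `j`-cocycle which is not a coboundary. -/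
def HredNe (Δ : SC n) (K : Type) [Field K] (j : ℕ) : Prop :=
  ∃ φ : Cch Δ K (j + 1), deltaLin Δ K (j + 1) φ = 0 ∧
    ∀ ψ : Cch Δ K j, deltaLin Δ K j ψ ≠ φ

/-- The reduced simplicial cohomology `H̃^j(Δ; K)` is one-dimensional (`≅ K`). -/
def HOneDim (Δ : SC n) (K : Type) [Field K] (j : ℕ) : Prop :=
  ∃ φ : Cch Δ K (j + 1), deltaLin Δ K (j + 1) φ = 0 ∧
    (∀ ψ : Cch Δ K j, deltaLin Δ K j ψ ≠ φ) ∧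
    ∀ φ' : Cch Δ K (j + 1), deltaLin Δ K (j + 1) φ' = 0 →
      ∃ (c : K) (ψ : Cch Δ K j), φ' = c • φ + deltaLin Δ K j ψ

/-- `dim_K H̃^{s-1}(Δ; K)`, computed from the cochain complex. -/
noncomputable def hdim (Δ : SC n) (K : Type) [Field K] (s : ℕ) : ℕ :=
  Module.finrank K (LinearMap.ker (deltaLin Δ K s)) -
    (if s = 0 then 0 else Module.finrank K (LinearMap.range (deltaLin Δ K (s - 1))))

/-- The graded Betti number `β_{i,j}` of the Stanley-Reisner ring of `Δ`,
over the polynomial ring on the variables indexed by `W`, as given by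
Hochster's formula: `β_{i,j}(R/I_Δ) = Σ_{σ ⊆ W, |σ|=j} dim_K H̃^{j-i-1}(Δ|_σ; K)`. -/
noncomputable def bettiOn (W : Finset (Fin n)) (Δ : SC n) (K : Type) [Field K]
    (i j : ℕ) : ℕ :=
  ∑ σ ∈ W.powerset.filter (fun σ => σ.card = j), hdim (Δ.restrict σ) K (j - i)

/-- Reisner's criterion: `Δ` is Cohen-Macaulay over `K` iff for every face `F`,
the reduced cohomology of `link_Δ(F)` vanishes below its dimension. -/
def IsCM (Δ : SC n) (K : Type) [Field K] : Prop :=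
  ∀ F ∈ Δ.faces, ∀ i : ℕ, (i : ℤ) < (Δ.linkF F).dim → ¬ HredNe (Δ.linkF F) K i

/-- `Δ` is disconnected (equivalently, `H̃^0(Δ;K) ≠ 0`): its vertex set splits into
two nonempty parts with no edge between them. -/
def Disconn (Δ : SC n) : Prop :=
  ∃ A B : Finset (Fin n),
    (∃ a ∈ A, ({a} : Finset (Fin n)) ∈ Δ.faces) ∧
    (∃ b ∈ B, ({b} : Finset (Fin n)) ∈ Δ.faces) ∧
    Disjoint A B ∧ (∀ w : Fin n, ({w} : Finset (Fin n)) ∈ Δ.faces → w ∈ A ∪ B) ∧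
    ∀ a ∈ A, ∀ b ∈ B, ({a, b} : Finset (Fin n)) ∉ Δ.faces

end Cohomology
section VD

variable {n : ℕ}

/-- Vertex decomposability: `Δ` is pure, and is either `{∅}` or has a vertex `v`
whose deletion and link are both vertex decomposable. -/
inductive IsVD : {n : ℕ} → SC n → Prop
  | triv {n : ℕ} (Δ : SC n) (h : Δ.faces = {∅}) : IsVD Δ
  | step {n : ℕ} (Δ : SC n) (hp : Δ.Pure) (v : Fin n)
      (hd : IsVD (Δ.del v)) (hl : IsVD (Δ.link v)) : IsVD Δ

/-- `Δ` is shellable: its facets admit an ordering `F_1, …, F_t` such that for each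
`k ≥ 2` the complex `(⋃_{i<k} ⟨F_i⟩) ∩ ⟨F_k⟩` is pure of dimension `dim F_k - 1`,
i.e. every face of it is contained in a face of it of cardinality `|F_k| - 1`. -/
def Shellable (Δ : SC n) : Prop :=
  ∃ L : List (Finset (Fin n)), L.Nodup ∧ (∀ F, Δ.isFacet F ↔ F ∈ L) ∧
    ∀ (k : ℕ) (hk : k < L.length), 0 < k →
      ∀ G : Finset (Fin n), G ⊆ L.get ⟨k, hk⟩ →
        (∃ (i : ℕ) (hi : i < L.length), i < k ∧ G ⊆ L.get ⟨i, hi⟩) →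
        ∃ G' : Finset (Fin n), G ⊆ G' ∧ G' ⊆ L.get ⟨k, hk⟩ ∧
          G'.card = (L.get ⟨k, hk⟩).card - 1 ∧
          ∃ (i : ℕ) (hi : i < L.length), i < k ∧ G' ⊆ L.get ⟨i, hi⟩

end VD

section Ideals

variable {n : ℕ}

/-- The Stanley-Reisner ideal of `Δ`: the ideal of `K[x_1,…,x_n]` generated by the
squarefree monomials `x_σ = ∏_{i ∈ σ} x_i` for the non-faces `σ ∉ Δ`. -/
noncomputable def SRideal (K : Type) [Field K] (Δ : SC n) : Ideal (MvPolynomial (Fin n) K) :=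
  Ideal.span ((fun σ : Finset (Fin n) => ∏ i ∈ σ, (MvPolynomial.X i : MvPolynomial (Fin n) K)) ''
    {σ : Finset (Fin n) | σ ∉ Δ.faces})

end Ideals

section Misc

/-- The trivial complex `{∅}` on `[n]`. -/
noncomputable def trivialSC (n : ℕ) : SC n where
  faces := {∅}
  down := by
    intro F hF G hG
    simp only [Finset.mem_singleton] at *
    subst hF
    exact Finset.subset_empty.mp hG
  empty_mem := by simp

/-- The alternating 0-1 vector `ε_k` with blocks of length `k`: entry `i` is the
parity of `i / k`, so it consists of alternating blocks of `k` zeros and `k` ones. -/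
def epsFun (k i : ℕ) : ℕ := (i / k) % 2

/-- The vector `α` defined by `α_1 = (0)` and `α_d = (α_{d-1}, complement α_{d-1})`:
entry `i` is the parity of the binary digit sum of `i` (Thue–Morse). -/
def alphaFun (i : ℕ) : ℕ := (Nat.digits 2 i).sum % 2

end Misc

/-!
Write `T = u - v` for two tables with the same `Δ`-margins. Every set of fewer than `k` vertices
is a face, so every margin of `T` of order `< k` vanishes. Such a nonzero integer table has
positive part of total mass at least `2^(k-1)`, by induction: its total sum is zero, so its
support contains two cells differing in some coordinate `j`, and the two slices of `T` at those
values of `j` are nonzero tables whose margins of order `< k - 1` vanish.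

Conversely, for a non-face `F` with `|F| = k`, let `u` (resp. `v`) be the indicator of the 0/1 cells
supported on `F` with an even (resp. odd) number of ones. A facet misses some `i ∈ F`, and
toggling coordinate `i` matches the cells counted by the two margins; `u` has total mass
`2^(k-1)`.
-/

variable {n : ℕ} {d : Fin n → ℕ}

theorem SC.exists_isFacet_superset (Δ : SC n) {G : Finset (Fin n)} (hG : G ∈ Δ.faces) :
    ∃ F, Δ.isFacet F ∧ G ⊆ F := by
  obtain ⟨F, hF, hmax⟩ := exists_max_image {H ∈ Δ.faces | G ⊆ H} card ⟨G, by simp [hG]⟩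
  rw [mem_filter] at hF
  refine ⟨F, ⟨hF.1, fun H hH hFH => ?_⟩, hF.2⟩
  exact eq_of_subset_of_card_le hFH (hmax H (by simp [hH, hF.2.trans hFH]))

section Margin

variable {R : Type*}

theorem margin_empty [AddCommMonoid R] (T : (∀ j, Fin (d j)) → R) (a : ∀ j, Fin (d j)) :
    margin d T ∅ a = ∑ b, T b := by
  simp [margin]

theorem margin_sum [AddCommMonoid R] {ι : Type*} (s : Finset ι) (T : ι → (∀ j, Fin (d j)) → R)
    (G : Finset (Fin n)) (a : ∀ j, Fin (d j)) :
    margin d (∑ c ∈ s, T c) G a = ∑ c ∈ s, margin d (T c) G a := by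
  simp only [margin, Finset.sum_apply]
  exact sum_comm

def tableSlice [Zero R] (j : Fin n) (c : Fin (d j)) (T : (∀ j, Fin (d j)) → R) :
    (∀ j, Fin (d j)) → R :=
  fun b => if b j = c then T b else 0

theorem sum_tableSlice [AddCommMonoid R] (j : Fin n) (T : (∀ j, Fin (d j)) → R) :
    ∑ c, tableSlice j c T = T := by
  funext b
  simp [tableSlice, Finset.sum_apply]

theorem margin_tableSlice [AddCommMonoid R] {j : Fin n} {c : Fin (d j)} (T : (∀ j, Fin (d j)) → R)
    {G : Finset (Fin n)} {a : ∀ j, Fin (d j)} (h : j ∈ G → a j = c) :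
    margin d (tableSlice j c T) G a = margin d T (insert j G) (Function.update a j c) := by
  unfold margin tableSlice
  rw [← Finset.sum_filter, Finset.filter_filter]
  refine sum_congr (filter_congr fun b _ => ?_) fun _ _ => rfl
  simp only [forall_mem_insert, Function.update_self]
  constructor
  · rintro ⟨hG, rfl⟩
    refine ⟨rfl, fun i hi => ?_⟩
    rcases eq_or_ne i j with rfl | hij
    · simp
    · rw [Function.update_of_ne hij, hG i hi]
  · rintro ⟨rfl, hG⟩
    refine ⟨fun i hi => ?_, rfl⟩
    rcases eq_or_ne i j with rfl | hij
    · rw [hG i hi, Function.update_self, h hi]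
    · rw [hG i hi, Function.update_of_ne hij]

theorem margin_tableSlice_of_ne [AddCommMonoid R] {j : Fin n} {c : Fin (d j)}
    (T : (∀ j, Fin (d j)) → R) {G : Finset (Fin n)} {a : ∀ j, Fin (d j)} (hj : j ∈ G)
    (hc : a j ≠ c) : margin d (tableSlice j c T) G a = 0 := by
  refine sum_eq_zero fun b hb => if_neg ?_
  rw [(mem_filter.mp hb).2 j hj]
  exact hc

theorem margin_tableSlice_eq_zero [AddCommMonoid R] {T : (∀ j, Fin (d j)) → R} {m : ℕ}
    (hT : ∀ G : Finset (Fin n), #G ≤ m + 1 → ∀ a, margin d T G a = 0) (j : Fin n)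
    (c : Fin (d j)) (G : Finset (Fin n)) (hG : #G ≤ m) (a : ∀ j, Fin (d j)) :
    margin d (tableSlice j c T) G a = 0 := by
  by_cases h : j ∈ G → a j = c
  · rw [margin_tableSlice T h]
    exact hT _ ((card_insert_le j G).trans (by omega)) _
  · push Not at h
    exact margin_tableSlice_of_ne T h.1 h.2

theorem margin_eq_zero_of_subset [AddCommMonoid R] {T : (∀ j, Fin (d j)) → R}
    {F G : Finset (Fin n)} (hGF : G ⊆ F) (hF : ∀ a, margin d T F a = 0) (a : ∀ j, Fin (d j)) :
    margin d T G a = 0 := by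
  induction h : #(F \ G) generalizing G a with
  | zero =>
    rw [card_eq_zero, sdiff_eq_empty_iff_subset] at h
    rw [subset_antisymm hGF h]
    exact hF a
  | succ m ih =>
    obtain ⟨j, hj⟩ : (F \ G).Nonempty := card_pos.mp (by omega)
    rw [mem_sdiff] at hj
    rw [← sum_tableSlice j T, margin_sum]
    refine sum_eq_zero fun c _ => ?_
    rw [margin_tableSlice T fun h => absurd h hj.2]
    refine ih (insert_subset hj.1 hGF) _ ?_
    rw [sdiff_insert, card_erase_of_mem (mem_sdiff.mpr hj), h, Nat.add_sub_cancel]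

end Margin

section PositivePart

theorem one_le_sum_max_of_sum_eq_zero {ι : Type*} [Fintype ι] {T : ι → ℤ} (hsum : ∑ b, T b = 0)
    (hT : T ≠ 0) : 1 ≤ ∑ b, max (T b) 0 := by
  obtain ⟨b₀, hb₀⟩ := Function.ne_iff.mp hT
  obtain ⟨b, -, hb⟩ := exists_pos_of_sum_zero_of_exists_nonzero T hsum ⟨b₀, mem_univ _, hb₀⟩
  calc 1 ≤ max (T b) 0 := le_max_of_le_left hb
    _ ≤ ∑ b, max (T b) 0 := single_le_sum (fun b _ => le_max_right (T b) 0) (mem_univ b)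

theorem sum_max_tableSlice_add_sum_max_tableSlice_le {T : (∀ j, Fin (d j)) → ℤ} {j : Fin n}
    {c c' : Fin (d j)} (hc : c ≠ c') :
    ∑ b, max (tableSlice j c T b) 0 + ∑ b, max (tableSlice j c' T b) 0 ≤ ∑ b, max (T b) 0 := by
  rw [← sum_add_distrib]
  refine sum_le_sum fun b _ => ?_
  unfold tableSlice
  split_ifs with h h' <;> simp_all

theorem two_pow_le_sum_max (m : ℕ) {T : (∀ j, Fin (d j)) → ℤ}
    (hT : ∀ G : Finset (Fin n), #G ≤ m → ∀ a, margin d T G a = 0) (hT0 : T ≠ 0) :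
    2 ^ m ≤ ∑ b, max (T b) 0 := by
  obtain ⟨b₀, hb₀⟩ := Function.ne_iff.mp hT0
  have hsum : ∑ b, T b = 0 := margin_empty T b₀ ▸ hT ∅ (by simp) b₀
  induction m generalizing T b₀ with
  | zero => simpa using one_le_sum_max_of_sum_eq_zero hsum hT0
  | succ m ih =>
    obtain ⟨b₁, hb₁, hb₁0⟩ : ∃ b₁ ∈ univ.erase b₀, T b₁ ≠ 0 := by
      refine exists_ne_zero_of_sum_ne_zero ?_
      rw [sum_erase_eq_sub (mem_univ b₀), hsum, zero_sub, neg_ne_zero]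
      exact hb₀
    obtain ⟨j, hj⟩ := Function.ne_iff.mp (ne_of_mem_erase hb₁)
    have hslice : ∀ b, T b ≠ 0 → 2 ^ m ≤ ∑ b', max (tableSlice j (b j) T b') 0 := by
      intro b hb
      have hb' : tableSlice j (b j) T b ≠ 0 := by simpa [tableSlice] using hb
      refine ih (margin_tableSlice_eq_zero hT j (b j)) (Function.ne_iff.mpr ⟨b, hb'⟩) b hb' ?_
      simpa [margin_empty] using margin_tableSlice_eq_zero hT j (b j) ∅ (by simp) b
    calc (2 : ℤ) ^ (m + 1) = 2 ^ m + 2 ^ m := by ring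
      _ ≤ _ := add_le_add (hslice b₁ hb₁0) (hslice b₀ hb₀)
      _ ≤ _ := sum_max_tableSlice_add_sum_max_tableSlice_le hj

end PositivePart

section EvenOdd

variable {α : Type*} [DecidableEq α]

theorem card_filter_even_eq_card_filter_odd {F : Finset α} {i : α} (hi : i ∈ F)
    (P : Finset α → Prop) [DecidablePred P] (hP : ∀ S, P (insert i S) ↔ P (S.erase i)) :
    #{S ∈ F.powerset | Even #S ∧ P S} = #{S ∈ F.powerset | Odd #S ∧ P S} := by
  let toggle : Finset α → Finset α := fun S => if i ∈ S then S.erase i else insert i S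
  have toggle_toggle (S : Finset α) : toggle (toggle S) = S := by
    by_cases h : i ∈ S <;> simp [toggle, h]
  have mem_powerset_toggle (S : Finset α) : toggle S ∈ F.powerset ↔ S ∈ F.powerset := by
    by_cases h : i ∈ S <;> simp [toggle, h, insert_subset_iff, hi, erase_subset_iff_of_mem]
  have even_card_toggle (S : Finset α) : Even #(toggle S) ↔ ¬ Even #S := by
    by_cases h : i ∈ S
    · simp only [toggle, h, if_true]
      rw [← card_erase_add_one h, Nat.even_add_one, not_not]
    · simp [toggle, h, Nat.even_add_one]
  have P_toggle (S : Finset α) : P (toggle S) ↔ P S := by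
    by_cases h : i ∈ S
    · simp only [toggle, h, if_true]
      rw [← hP, insert_eq_of_mem h]
    · simp only [toggle, h, if_false]
      rw [hP, erase_eq_of_notMem h]
  refine card_nbij' toggle toggle (fun S hS => ?_) (fun S hS => ?_)
    (fun S _ => toggle_toggle S) (fun S _ => toggle_toggle S)
  all_goals
    simpa only [mem_coe, mem_filter, mem_powerset_toggle, P_toggle, ← Nat.not_even_iff_odd,
      even_card_toggle, not_not] using hS

theorem card_powerset_filter_even {F : Finset α} (hF : F.Nonempty) :
    #{S ∈ F.powerset | Even #S} = 2 ^ (#F - 1) := by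
  obtain ⟨i, hi⟩ := hF
  have hcard := card_filter_even_eq_card_filter_odd hi (fun _ => True) (fun _ => Iff.rfl)
  simp only [and_true] at hcard
  have htotal := card_filter_add_card_filter_not (s := F.powerset) (fun S => Even #S)
  simp only [Nat.not_even_iff_odd, card_powerset] at htotal
  have : 2 ^ #F = 2 * 2 ^ (#F - 1) := by
    rw [← pow_succ', Nat.sub_add_cancel (card_pos.mpr ⟨i, hi⟩)]
  omega

end EvenOdd

section Construction

variable (hd : ∀ j, 2 ≤ d j)

def cellOf (S : Finset (Fin n)) : ∀ j, Fin (d j) :=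
  fun j => ⟨if j ∈ S then 1 else 0, by have := hd j; split_ifs <;> omega⟩

theorem cellOf_injective : Function.Injective (cellOf hd) := by
  intro S S' h
  ext j
  have := congrArg (fun b => (b j : ℕ)) h
  by_cases hS : j ∈ S <;> by_cases hS' : j ∈ S' <;> simp_all [cellOf]

theorem cellOf_insert_apply_of_ne {S : Finset (Fin n)} {i j : Fin n} (hij : j ≠ i) :
    cellOf hd (insert i S) j = cellOf hd (S.erase i) j := by
  simp [cellOf, hij]

def tableOf (𝒮 : Finset (Finset (Fin n))) : (∀ j, Fin (d j)) → ℕ :=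
  fun b => #{S ∈ 𝒮 | cellOf hd S = b}

theorem margin_tableOf (𝒮 : Finset (Finset (Fin n))) (G : Finset (Fin n)) (a : ∀ j, Fin (d j)) :
    margin d (tableOf hd 𝒮) G a = #{S ∈ 𝒮 | ∀ j ∈ G, cellOf hd S j = a j} := by
  unfold margin tableOf
  rw [sum_card_fiberwise_eq_card_filter]
  simp

theorem sum_tableOf (𝒮 : Finset (Finset (Fin n))) : ∑ b, tableOf hd 𝒮 b = #𝒮 := by
  simpa [margin_empty] using margin_tableOf hd 𝒮 ∅ (cellOf hd ∅)

theorem tableOf_injective : Function.Injective (tableOf hd) := by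
  have tableOf_cellOf : ∀ 𝒮 S, tableOf hd 𝒮 (cellOf hd S) = if S ∈ 𝒮 then 1 else 0 := by
    intro 𝒮 S
    simp only [tableOf, (cellOf_injective hd).eq_iff, filter_eq']
    split_ifs <;> rfl
  intro 𝒮 𝒮' h
  ext S
  have := congrFun h (cellOf hd S)
  rw [tableOf_cellOf, tableOf_cellOf] at this
  split_ifs at this <;> simp_all

theorem margin_tableOf_even_eq_odd {F G : Finset (Fin n)} (hFG : ¬ F ⊆ G) (a : ∀ j, Fin (d j)) :
    margin d (tableOf hd {S ∈ F.powerset | Even #S}) G a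
      = margin d (tableOf hd {S ∈ F.powerset | Odd #S}) G a := by
  obtain ⟨i, hiF, hiG⟩ := not_subset.mp hFG
  simp only [margin_tableOf, filter_filter]
  refine card_filter_even_eq_card_filter_odd hiF _ fun S => forall₂_congr fun j hj => ?_
  rw [cellOf_insert_apply_of_ne hd (ne_of_mem_of_not_mem hj hiG)]

end Construction

theorem two_pow_le_sum_of_margin_eq {Δ : SC n} {m : ℕ}
    (hΔ : ∀ G : Finset (Fin n), #G ≤ m → G ∈ Δ.faces) {u v : (∀ j, Fin (d j)) → ℕ} (huv : u ≠ v)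
    (hmarg : ∀ F, Δ.isFacet F → ∀ a, margin d u F a = margin d v F a) :
    2 ^ m ≤ ∑ b, u b := by
  set T : (∀ j, Fin (d j)) → ℤ := fun b => u b - v b
  have hT0 : T ≠ 0 := fun h => huv (funext fun b => by simpa [T, sub_eq_zero] using congrFun h b)
  have hTF : ∀ F, Δ.isFacet F → ∀ a, margin d T F a = 0 := fun F hF a => by
    have h := hmarg F hF a
    simp only [margin] at h
    simp only [T, margin, sum_sub_distrib, ← Nat.cast_sum, h, sub_self]
  have hT : ∀ G : Finset (Fin n), #G ≤ m → ∀ a, margin d T G a = 0 := fun G hG => by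
    obtain ⟨F, hF, hGF⟩ := Δ.exists_isFacet_superset (hΔ G hG)
    exact margin_eq_zero_of_subset hGF (hTF F hF)
  zify
  calc (2 : ℤ) ^ m ≤ ∑ b, max (T b) 0 := two_pow_le_sum_max m hT hT0
    _ ≤ ∑ b, (u b : ℤ) := sum_le_sum fun b _ => max_le (by simp [T]) (by positivity)

/-- If every `d_i ≥ 2` and `k` is the smallest cardinality of a
non-face of `Δ` (the initial degree of `I_Δ`), then the smallest degree of a nonzero
binomial `x^u - x^v` in the toric ideal `I_{M(Δ,d)}` is `2^(k-1)`. -/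
theorem initial_degree_toric {n : ℕ} (Δ : SC n) (d : Fin n → ℕ) (hd : ∀ j, 2 ≤ d j)
    (k : ℕ) (hk : IsLeast {m : ℕ | ∃ F : Finset (Fin n), F ∉ Δ.faces ∧ F.card = m} k) :
    IsLeast {D : ℕ | ∃ u v : (∀ j, Fin (d j)) → ℕ, u ≠ v ∧
        (∀ F : Finset (Fin n), Δ.isFacet F → ∀ a, margin d u F a = margin d v F a) ∧
        D = ∑ b : ∀ j, Fin (d j), u b}
      (2 ^ (k - 1)) := by
  obtain ⟨⟨F, hF, rfl⟩, hmin⟩ := hk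
  have hFne : F.Nonempty := nonempty_iff_ne_empty.mpr fun h => hF (h ▸ Δ.empty_mem)
  refine ⟨⟨tableOf hd {S ∈ F.powerset | Even #S}, tableOf hd {S ∈ F.powerset | Odd #S},
    (tableOf_injective hd).ne (ne_of_mem_of_not_mem' (a := ∅) (by simp) (by simp)),
    fun G hG => margin_tableOf_even_eq_odd hd fun hFG => hF (Δ.down G hG.1 F hFG),
    by rw [sum_tableOf, card_powerset_filter_even hFne]⟩, ?_⟩
  rintro D ⟨u, v, huv, hmarg, rfl⟩
  refine two_pow_le_sum_of_margin_eq (fun G hG => ?_) huv hmarg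
  by_contra hG'
  have := hmin ⟨G, hG', rfl⟩
  have := hFne.card_pos
  omega
end

section
/- Let Γ be the boundary of the n-simplex (the complex of all proper subsets of [n], n ≥ 2) and consider the binary hierarchical model (all d_i = 2). Then ker M(Γ,(2,…,2)) ∩ ℤ^{2^n} is the rank-one lattice spanned by the vector w ∈ ℤ^{2^n} whose coordinate at a cell b ∈ {0,1}^n is (−1)^{b_1+⋯+b_n}. Consequently the toric ideal I_M is principal, generated by a binomial of degree 2^{n−1}. -/
open Finset

open scoped Classical

open Function

/-! The facets of the boundary of the simplex are the sets `[n] ∖ {i}`, and the margin along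
`[n] ∖ {i}` at `a` is the sum of the two cells that agree with `a` off `i`. So `T` lies in the
kernel iff changing any one coordinate negates `T`, i.e. iff `T` is `T 0` times the sign
`b ↦ (-1)^|b|`. The positive part of this sign vector counts the even cells, which form half of
the `2^n` cells because the signs sum to `∏ᵢ (1 + (-1)) = 0`. -/

lemma SC.isFacet_iff_eq_erase_of_faces_eq_proper {n : ℕ} {Γ : SC n}
    (hΓ : Γ.faces = univ.powerset.filter (fun F => F ≠ univ)) (F : Finset (Fin n)) :
    Γ.isFacet F ↔ ∃ i, F = univ.erase i := by
  have mem_faces : ∀ G, G ∈ Γ.faces ↔ G ≠ univ := by simp [hΓ]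
  simp only [SC.isFacet, mem_faces]
  constructor
  · rintro ⟨hF, hmax⟩
    obtain ⟨i, hi⟩ : ∃ i, i ∉ F := by simpa [eq_univ_iff_forall] using hF
    exact ⟨i, hmax _ (erase_ne_self.mpr (mem_univ i))
      (subset_erase.mpr ⟨subset_univ F, hi⟩)⟩
  · rintro ⟨i, rfl⟩
    refine ⟨erase_ne_self.mpr (mem_univ i), fun G hG hsub => ?_⟩
    have hi : i ∉ G := fun hi => hG (eq_univ_of_forall fun j => by
      by_cases hj : j = i
      · exact hj ▸ hi
      · exact hsub (mem_erase.mpr ⟨hj, mem_univ j⟩))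
    exact hsub.antisymm (subset_erase.mpr ⟨subset_univ G, hi⟩)

lemma margin_univ_erase {n : ℕ} {R : Type*} [AddCommMonoid R] (d : Fin n → ℕ)
    (T : (∀ j, Fin (d j)) → R) (i : Fin n) (a : ∀ j, Fin (d j)) :
    margin d T (univ.erase i) a = ∑ t, T (update a i t) := by
  have fiber : univ.filter (fun b : ∀ j, Fin (d j) => ∀ j ∈ univ.erase i, b j = a j)
      = univ.image (update a i) := by
    ext b
    simp only [mem_filter, mem_univ, true_and, and_true, mem_erase, ne_eq, mem_image]
    constructor
    · exact fun h => ⟨b i, funext fun j => by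
        by_cases hj : j = i
        · subst hj; simp
        · simp [hj, (h j hj).symm]⟩
    · rintro ⟨t, rfl⟩ j hj
      simp [hj]
  rw [margin, fiber, sum_image fun s _ t _ h => update_injective a i h]

lemma SC.inKer_iff_of_faces_eq_proper {n : ℕ} {Γ : SC n}
    (hΓ : Γ.faces = univ.powerset.filter (fun F => F ≠ univ)) {R : Type*} [AddCommMonoid R]
    (d : Fin n → ℕ) (T : (∀ j, Fin (d j)) → R) :
    inKer Γ d T ↔ ∀ i a, ∑ t, T (update a i t) = 0 := by
  simp only [inKer, SC.isFacet_iff_eq_erase_of_faces_eq_proper hΓ, forall_exists_index,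
    forall_eq_apply_imp_iff, margin_univ_erase]

section BinaryCells

variable {ι : Type*} [Fintype ι] [DecidableEq ι]

lemma neg_one_pow_sum_update {R : Type*} [Monoid R] [HasDistribNeg R]
    (a : ι → Fin 2) (i : ι) (t : Fin 2) :
    (-1 : R) ^ (∑ j, (update a i t j : ℕ)) =
      (-1) ^ (t : ℕ) * (-1) ^ (∑ j ∈ univ.erase i, (a j : ℕ)) := by
  rw [← add_sum_erase _ _ (mem_univ i), pow_add, update_self]
  congr 2
  exact sum_congr rfl fun j hj => by rw [update_of_ne (ne_of_mem_erase hj)]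

lemma neg_one_pow_sum_update_one {R : Type*} [Monoid R] [HasDistribNeg R]
    (a : ι → Fin 2) (i : ι) :
    (-1 : R) ^ (∑ j, (update a i 1 j : ℕ)) = -(-1) ^ (∑ j, (update a i 0 j : ℕ)) := by
  simp [neg_one_pow_sum_update]

lemma eq_mul_neg_one_pow_sum_of_add_update_eq_zero {R : Type*} [Ring R] (T : (ι → Fin 2) → R)
    (hT : ∀ i a, T (update a i 0) + T (update a i 1) = 0) (b : ι → Fin 2) :
    T b = T 0 * (-1) ^ (∑ j, (b j : ℕ)) := by
  suffices ∀ s : Finset ι, ∀ b : ι → Fin 2, (∀ j ∉ s, b j = 0) →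
      T b = T 0 * (-1) ^ (∑ j, (b j : ℕ)) from this univ b (by simp)
  intro s
  induction s using Finset.induction_on with
  | empty =>
    intro b hb
    obtain rfl : b = 0 := funext fun j => hb j (notMem_empty j)
    simp
  | insert i s _ ih =>
    intro b hb
    have h0 : T (update b i 0) = T 0 * (-1) ^ (∑ j, (update b i 0 j : ℕ)) := by
      refine ih _ fun j hj => ?_
      by_cases hji : j = i
      · simp [hji]
      · simp [hji, hb j (by simp [hji, hj])]
    have h : ∀ t, T (update b i t) = T 0 * (-1) ^ (∑ j, (update b i t j : ℕ)) :=
      Fin.forall_fin_two.mpr ⟨h0, by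
        rw [eq_neg_of_add_eq_zero_right (hT i b), h0, neg_one_pow_sum_update_one, mul_neg]⟩
    simpa using h (b i)

lemma forall_add_update_eq_zero_iff {R : Type*} [Ring R] (T : (ι → Fin 2) → R) :
    (∀ i a, T (update a i 0) + T (update a i 1) = 0) ↔
      ∃ c : R, T = fun b => c * (-1) ^ (∑ j, (b j : ℕ)) := by
  refine ⟨fun hT => ⟨T 0, funext (eq_mul_neg_one_pow_sum_of_add_update_eq_zero T hT)⟩, ?_⟩
  rintro ⟨c, rfl⟩ i a
  dsimp only
  rw [neg_one_pow_sum_update_one, mul_neg, add_neg_cancel]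

lemma sum_neg_one_pow_sum_eq_zero [Nonempty ι] {R : Type*} [CommRing R] :
    ∑ b : ι → Fin 2, (-1 : R) ^ (∑ j, (b j : ℕ)) = 0 := by
  simp_rw [← prod_pow_eq_pow_sum]
  rw [← Fintype.prod_sum fun (_ : ι) (t : Fin 2) => (-1 : R) ^ (t : ℕ)]
  simp

lemma sum_max_neg_one_pow_sum_zero :
    ∑ b : ι → Fin 2, max ((-1 : ℤ) ^ (∑ j, (b j : ℕ))) 0 =
      2 ^ (Fintype.card ι - 1) := by
  cases isEmpty_or_nonempty ι
  · simp
  · have two_mul_max : ∀ s : ℕ, 2 * max ((-1 : ℤ) ^ s) 0 = 1 + (-1) ^ s := by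
      intro s
      rcases neg_one_pow_eq_or ℤ s with h | h <;> rw [h] <;> norm_num
    apply mul_left_cancel₀ (two_ne_zero : (2 : ℤ) ≠ 0)
    rw [mul_sum, sum_congr rfl fun b _ => two_mul_max _, sum_add_distrib,
      sum_neg_one_pow_sum_eq_zero]
    simp [← pow_succ', Nat.sub_add_cancel Fintype.card_pos]

end BinaryCells

theorem boundary_simplex_kernel_general {n : ℕ} (Γ : SC n)
    (hΓ : Γ.faces = Finset.univ.powerset.filter (fun F => F ≠ Finset.univ)) :
    (∀ T : (∀ _ : Fin n, Fin 2) → ℤ,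
      inKer Γ (fun _ => 2) T ↔
        ∃ c : ℤ, T = fun b => c * (-1) ^ (∑ j, (b j : ℕ))) ∧
    (∑ b : ∀ _ : Fin n, Fin 2, max ((-1 : ℤ) ^ (∑ j, (b j : ℕ))) 0 = 2 ^ (n - 1)) := by
  refine ⟨fun T => ?_, by simpa using sum_max_neg_one_pow_sum_zero (ι := Fin n)⟩
  rw [SC.inKer_iff_of_faces_eq_proper hΓ, ← forall_add_update_eq_zero_iff]
  simp only [Fin.sum_univ_two]

/-- For the boundary `Γ` of the `n`-simplex (`n ≥ 2`) and the binary
model, the integer kernel of `M(Γ,(2,…,2))` is the rank-one lattice spanned by the sign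
vector `b ↦ (-1)^(b_1+⋯+b_n)`; the positive part of this generator has degree `2^(n-1)`,
so the toric ideal is principal, generated by a binomial of degree `2^(n-1)`. -/
theorem boundary_simplex_kernel {n : ℕ} (hn : 2 ≤ n) (Γ : SC n)
    (hΓ : Γ.faces = Finset.univ.powerset.filter (fun F => F ≠ Finset.univ)) :
    (∀ T : (∀ _ : Fin n, Fin 2) → ℤ,
      inKer Γ (fun _ => 2) T ↔
        ∃ c : ℤ, T = fun b => c * (-1) ^ (∑ j, (b j : ℕ))) ∧
    (∑ b : ∀ _ : Fin n, Fin 2, max ((-1 : ℤ) ^ (∑ j, (b j : ℕ))) 0 = 2 ^ (n - 1)) :=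
  boundary_simplex_kernel_general Γ hΓ
end

section
/- Every vertex decomposable simplicial complex is shellable, and hence Cohen-Macaulay over every field. -/
open Finset

open scoped Classical

/-! Induct on vertex decomposability at a shedding vertex `v`. If every facet contains `v`, coning
a shelling of the link over `v` shells the complex. Otherwise purity makes the facets of the
deletion exactly the facets avoiding `v`, and a shelling of the deletion followed by the cone over
a shelling of the link is a shelling.

Links of faces of a vertex decomposable complex are vertex decomposable, so by Reisner's criterion
it suffices that such a complex has no reduced cohomology below its dimension. The same induction
gives this: a cone is acyclic through the homotopy that cones off `v`; otherwise a cocycle is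
first made a coboundary on the deletion, the remainder coned off at `v` is a cocycle of the link,
and its primitive joined back to `v` completes the primitive. -/

section Coboundary

variable {α : Type*} [LinearOrder α] (K : Type*) [Field K]

noncomputable def insertSign (v : α) (F : Finset α) : K :=
  (-1) ^ (F.filter (fun w => w < v)).card

variable {K}

theorem insertSign_mul_self (v : α) (F : Finset α) :
    insertSign K v F * insertSign K v F = 1 := by
  rw [insertSign, ← pow_add]
  exact Even.neg_one_pow ⟨_, rfl⟩

theorem insertSign_erase {u : α} {F : Finset α} (hu : u ∈ F) (w : α) :
    insertSign K w F = (if u < w then -1 else 1) * insertSign K w (F.erase u) := by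
  conv_lhs => rw [insertSign, ← Finset.insert_erase hu, Finset.filter_insert]
  split_ifs with h
  · rw [Finset.card_insert_of_notMem (by simp), pow_succ, insertSign, mul_comm]
  · rw [insertSign, one_mul]

theorem insertSign_erase_self (v : α) (F : Finset α) :
    insertSign K v (F.erase v) = insertSign K v F := by
  by_cases hv : v ∈ F
  · rw [insertSign_erase hv v, if_neg (lt_irrefl v), one_mul]
  · rw [Finset.erase_eq_of_notMem hv]

theorem insertSign_insert_self (v : α) (F : Finset α) :
    insertSign K v (insert v F) = insertSign K v F := by
  rw [← insertSign_erase_self, Finset.erase_insert_eq_erase, insertSign_erase_self]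

theorem insertSign_mul_insertSign_erase {u w : α} {F : Finset α} (hu : u ∈ F) (hw : w ∈ F)
    (h : u ≠ w) :
    insertSign K w F * insertSign K u (F.erase w) =
      -(insertSign K u F * insertSign K w (F.erase u)) := by
  rw [insertSign_erase hu w, insertSign_erase hw u]
  rcases h.lt_or_gt with h | h <;> simp [h, h.not_gt] <;> ring

variable (K) in
noncomputable def coboundary : (Finset α → K) →ₗ[K] Finset α → K where
  toFun f F := ∑ w ∈ F, insertSign K w F * f (F.erase w)
  map_add' f g := by
    funext F
    simp only [Pi.add_apply, mul_add, Finset.sum_add_distrib]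
  map_smul' c f := by
    funext F
    simp only [Pi.smul_apply, smul_eq_mul, RingHom.id_apply, Finset.mul_sum]
    exact Finset.sum_congr rfl fun _ _ => by ring

theorem coboundary_apply (f : Finset α → K) (F : Finset α) :
    coboundary K f F = ∑ w ∈ F, insertSign K w F * f (F.erase w) := rfl

theorem coboundary_coboundary (f : Finset α → K) : coboundary K (coboundary K f) = 0 := by
  funext F
  simp only [coboundary_apply, Finset.mul_sum, Pi.zero_apply]
  rw [Finset.sum_sigma']
  refine Finset.sum_involution (fun p _ => ⟨p.2, p.1⟩) ?_ ?_ ?_ ?_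
  · rintro ⟨w, u⟩ hp
    obtain ⟨hw, huw, hu⟩ : w ∈ F ∧ u ≠ w ∧ u ∈ F := by simpa using hp
    dsimp only
    rw [Finset.erase_right_comm]
    linear_combination f ((F.erase u).erase w) *
      insertSign_mul_insertSign_erase (K := K) hu hw huw
  · rintro ⟨w, u⟩ hp - h
    simp_all
  · rintro ⟨w, u⟩ hp
    simp_all [eq_comm]
  · intros; rfl

variable (K) in
noncomputable def coneHomotopy (v : α) : (Finset α → K) →ₗ[K] Finset α → K where
  toFun f F := if v ∈ F then 0 else insertSign K v F * f (insert v F)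
  map_add' f g := by
    funext F
    split_ifs <;> simp [*, mul_add]
  map_smul' c f := by
    funext F
    split_ifs <;> simp [*, mul_left_comm]

theorem coneHomotopy_apply (v : α) (f : Finset α → K) (F : Finset α) :
    coneHomotopy K v f F = if v ∈ F then 0 else insertSign K v F * f (insert v F) := rfl

variable (K) in
noncomputable def vertexJoin (v : α) : (Finset α → K) →ₗ[K] Finset α → K where
  toFun f F := if v ∈ F then insertSign K v F * f (F.erase v) else 0
  map_add' f g := by
    funext F
    split_ifs <;> simp [*, mul_add]
  map_smul' c f := by
    funext F
    split_ifs <;> simp [*, mul_left_comm]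

theorem vertexJoin_apply (v : α) (f : Finset α → K) (F : Finset α) :
    vertexJoin K v f F = if v ∈ F then insertSign K v F * f (F.erase v) else 0 := rfl

theorem coboundary_coneHomotopy_add (v : α) (f : Finset α → K) (F : Finset α) :
    coboundary K (coneHomotopy K v f) F + coneHomotopy K v (coboundary K f) F = f F := by
  by_cases hv : v ∈ F
  · rw [coboundary_apply, Finset.sum_eq_single_of_mem v hv, coneHomotopy_apply,
      coneHomotopy_apply, if_pos hv, if_neg (Finset.notMem_erase v F), Finset.insert_erase hv,
      insertSign_erase_self]
    · linear_combination f F * insertSign_mul_self (K := K) v F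
    · intro w _ hwv
      rw [coneHomotopy_apply, if_pos (Finset.mem_erase.mpr ⟨hwv.symm, hv⟩), mul_zero]
  · have hsign : ∀ w ∈ F, insertSign K w F * insertSign K v (F.erase w) =
        -(insertSign K v F * insertSign K w (insert v F)) := by
      intro w hw
      have hwv : w ≠ v := fun h => hv (h ▸ hw)
      rw [insertSign_erase (Finset.mem_insert_self v F) w, Finset.erase_insert hv,
        insertSign_erase hw v]
      rcases hwv.lt_or_gt with h | h <;> simp [h, h.not_gt] <;> ring
    simp only [coboundary_apply, coneHomotopy_apply, if_neg hv, Finset.sum_insert hv,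
      Finset.erase_insert hv, insertSign_insert_self, mul_add, Finset.mul_sum]
    have hcancel : ∀ w ∈ F,
        (insertSign K w F * if v ∈ F.erase w then 0
          else insertSign K v (F.erase w) * f (insert v (F.erase w))) +
        insertSign K v F * (insertSign K w (insert v F) * f ((insert v F).erase w)) = 0 := by
      intro w hw
      rw [if_neg (fun h => hv (Finset.mem_of_mem_erase h)),
        Finset.erase_insert_of_ne (by rintro rfl; exact hv hw)]
      linear_combination f (insert v (F.erase w)) * hsign w hw
    have hsum := Finset.sum_eq_zero hcancel
    rw [Finset.sum_add_distrib] at hsum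
    linear_combination hsum + f F * insertSign_mul_self (K := K) v F

theorem coboundary_vertexJoin (v : α) (f : Finset α → K) (F : Finset α) :
    coboundary K (vertexJoin K v f) F = -vertexJoin K v (coboundary K f) F := by
  by_cases hv : v ∈ F
  · have hterm : ∀ w ∈ F.erase v, insertSign K w F * vertexJoin K v f (F.erase w) =
        -(insertSign K v F * (insertSign K w (F.erase v) * f ((F.erase v).erase w))) := by
      intro w hw
      obtain ⟨hwv, hwF⟩ := Finset.mem_erase.mp hw
      rw [vertexJoin_apply, if_pos (Finset.mem_erase.mpr ⟨hwv.symm, hv⟩),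
        Finset.erase_right_comm]
      linear_combination f ((F.erase v).erase w) *
        insertSign_mul_insertSign_erase (K := K) hv hwF hwv.symm
    rw [coboundary_apply, ← Finset.sum_erase _ (by rw [vertexJoin_apply,
      if_neg (Finset.notMem_erase v F), mul_zero]), Finset.sum_congr rfl hterm,
      vertexJoin_apply, if_pos hv, coboundary_apply, Finset.sum_neg_distrib, Finset.mul_sum]
  · rw [coboundary_apply, vertexJoin_apply, if_neg hv, neg_zero]
    exact Finset.sum_eq_zero fun w _ => by
      rw [vertexJoin_apply, if_neg (fun h => hv (Finset.mem_of_mem_erase h)), mul_zero]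

end Coboundary

namespace SC

variable {n : ℕ}

theorem ext {Δ Γ : SC n} (h : Δ.faces = Γ.faces) : Δ = Γ := by
  cases Δ; cases Γ; simpa using h

theorem isFacet_iff_maximal (Δ : SC n) (F : Finset (Fin n)) :
    Δ.isFacet F ↔ Maximal (· ∈ Δ.faces) F :=
  ⟨fun h => ⟨h.1, fun G hG hFG => (h.2 G hG hFG).symm.le⟩,
    fun h => ⟨h.1, fun _ hG hFG => le_antisymm hFG (h.2 hG hFG)⟩⟩

theorem exists_isFacet_superset_s14 (Δ : SC n) {F : Finset (Fin n)} (hF : F ∈ Δ.faces) :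
    ∃ G, Δ.isFacet G ∧ F ⊆ G := by
  obtain ⟨G, hFG, hG⟩ := Finite.exists_le_maximal hF
  exact ⟨G, (Δ.isFacet_iff_maximal G).mpr hG, hFG⟩

theorem exists_isFacet_card_eq_sup (Δ : SC n) :
    ∃ G, Δ.isFacet G ∧ G.card = Δ.faces.sup Finset.card := by
  obtain ⟨F, hF, hFc⟩ := Finset.exists_mem_eq_sup Δ.faces ⟨∅, Δ.empty_mem⟩ Finset.card
  obtain ⟨G, hG, hFG⟩ := Δ.exists_isFacet_superset_s14 hF
  exact ⟨G, hG, le_antisymm (Finset.le_sup hG.1) (hFc ▸ Finset.card_le_card hFG)⟩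

theorem Pure.card_eq_sup {Δ : SC n} (hp : Δ.Pure) {F : Finset (Fin n)} (hF : Δ.isFacet F) :
    F.card = Δ.faces.sup Finset.card := by
  obtain ⟨G, hG, hGc⟩ := Δ.exists_isFacet_card_eq_sup
  rw [← hGc]
  exact hp F G hF hG

theorem IsCone.insert_mem {Δ : SC n} {v : Fin n} (hc : Δ.IsCone v)
    {F : Finset (Fin n)} (hF : F ∈ Δ.faces) : insert v F ∈ Δ.faces := by
  obtain ⟨G, hG, hFG⟩ := Δ.exists_isFacet_superset_s14 hF
  exact Δ.down G hG.1 _ (Finset.insert_subset (hc G hG) hFG)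

theorem mem_del (Δ : SC n) (v : Fin n) (G : Finset (Fin n)) :
    G ∈ (Δ.del v).faces ↔ G ∈ Δ.faces ∧ v ∉ G := by
  simp [SC.del]

theorem mem_link (Δ : SC n) (v : Fin n) (G : Finset (Fin n)) :
    G ∈ (Δ.link v).faces ↔ G = ∅ ∨ (G ∈ Δ.faces ∧ v ∉ G ∧ insert v G ∈ Δ.faces) := by
  simp [SC.link]

theorem mem_link_of_singleton_mem {Δ : SC n} {v : Fin n} (hv : {v} ∈ Δ.faces)
    (G : Finset (Fin n)) :
    G ∈ (Δ.link v).faces ↔ G ∈ Δ.faces ∧ v ∉ G ∧ insert v G ∈ Δ.faces := by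
  rw [mem_link]
  constructor
  · rintro (rfl | h)
    · exact ⟨Δ.empty_mem, by simp, by simpa using hv⟩
    · exact h
  · exact Or.inr

theorem erase_mem_link {Δ : SC n} {v : Fin n} {F : Finset (Fin n)} (hF : F ∈ Δ.faces)
    (hvF : v ∈ F) : F.erase v ∈ (Δ.link v).faces := by
  rw [mem_link, Finset.insert_erase hvF]
  exact Or.inr ⟨Δ.down F hF _ (Finset.erase_subset _ _), Finset.notMem_erase _ _, hF⟩

theorem isFacet_insert_iff {Δ : SC n} {v : Fin n} (hv : {v} ∈ Δ.faces) {G : Finset (Fin n)}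
    (hvG : v ∉ G) : Δ.isFacet (insert v G) ↔ (Δ.link v).isFacet G := by
  constructor
  · rintro ⟨hG, hmax⟩
    refine ⟨(mem_link_of_singleton_mem hv G).mpr
      ⟨Δ.down _ hG G (Finset.subset_insert v G), hvG, hG⟩, fun H hH hGH => ?_⟩
    obtain ⟨-, hvH, hH⟩ := (mem_link_of_singleton_mem hv H).mp hH
    have := hmax _ hH (Finset.insert_subset_insert v hGH)
    rw [← Finset.erase_insert hvG, this, Finset.erase_insert hvH]
  · rintro ⟨hG, hmax⟩
    obtain ⟨-, -, hG⟩ := (mem_link_of_singleton_mem hv G).mp hG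
    refine ⟨hG, fun H hH hGH => ?_⟩
    have hvH : v ∈ H := hGH (Finset.mem_insert_self v G)
    have hGH' : G ⊆ H.erase v := fun x hx =>
      Finset.mem_erase.mpr ⟨by rintro rfl; exact hvG hx, hGH (Finset.mem_insert_of_mem hx)⟩
    rw [hmax _ (erase_mem_link hH hvH) hGH', Finset.insert_erase hvH]

theorem mem_map_insert_iff {Δ : SC n} {v : Fin n} (hv : {v} ∈ Δ.faces)
    {L : List (Finset (Fin n))} (hL : ∀ G, (Δ.link v).isFacet G ↔ G ∈ L) (F : Finset (Fin n)) :
    F ∈ L.map (insert v) ↔ Δ.isFacet F ∧ v ∈ F := by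
  constructor
  · intro hF
    obtain ⟨G, hG, rfl⟩ := List.mem_map.mp hF
    have hG := (hL G).mpr hG
    have hvG := ((mem_link_of_singleton_mem hv G).mp hG.1).2.1
    exact ⟨(isFacet_insert_iff hv hvG).mpr hG, Finset.mem_insert_self v G⟩
  · rintro ⟨hF, hvF⟩
    rw [← Finset.insert_erase hvF] at hF ⊢
    exact List.mem_map_of_mem ((hL _).mp ((isFacet_insert_iff hv (Finset.notMem_erase v F)).mp hF))

theorem isFacet_del_of_isFacet {Δ : SC n} {v : Fin n} {F : Finset (Fin n)} (hF : Δ.isFacet F)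
    (hvF : v ∉ F) : (Δ.del v).isFacet F :=
  ⟨(mem_del Δ v F).mpr ⟨hF.1, hvF⟩, fun G hG => hF.2 G ((mem_del Δ v G).mp hG).1⟩

theorem isFacet_del_iff {Δ : SC n} {v : Fin n} (hp : Δ.Pure) (hpd : (Δ.del v).Pure)
    {F₀ : Finset (Fin n)} (hF₀ : Δ.isFacet F₀) (hvF₀ : v ∉ F₀) (F : Finset (Fin n)) :
    (Δ.del v).isFacet F ↔ Δ.isFacet F ∧ v ∉ F := by
  refine ⟨fun hF => ?_, fun hF => isFacet_del_of_isFacet hF.1 hF.2⟩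
  obtain ⟨hFΔ, hvF⟩ := (mem_del Δ v F).mp hF.1
  refine ⟨?_, hvF⟩
  obtain ⟨G, hG, hFG⟩ := Δ.exists_isFacet_superset_s14 hFΔ
  by_cases hvG : v ∈ G
  · have hFG' : F = G.erase v := hF.2 _
      ((mem_del Δ v _).mpr ⟨Δ.down G hG.1 _ (Finset.erase_subset _ _), Finset.notMem_erase _ _⟩)
      (fun x hx => Finset.mem_erase.mpr ⟨by rintro rfl; exact hvF hx, hFG hx⟩)
    have hcard := (hpd F F₀ hF (isFacet_del_of_isFacet hF₀ hvF₀)).trans (hp F₀ G hF₀ hG)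
    rw [hFG', Finset.card_erase_of_mem hvG] at hcard
    have := Finset.card_pos.mpr ⟨v, hvG⟩
    omega
  · rwa [hF.2 G ((mem_del Δ v G).mpr ⟨hG.1, hvG⟩) hFG]

theorem sup_card_del {Δ : SC n} {v : Fin n} (hp : Δ.Pure) {F₀ : Finset (Fin n)}
    (hF₀ : Δ.isFacet F₀) (hvF₀ : v ∉ F₀) :
    (Δ.del v).faces.sup Finset.card = Δ.faces.sup Finset.card := by
  refine le_antisymm (Finset.sup_le fun G hG => Finset.le_sup ((mem_del Δ v G).mp hG).1) ?_
  rw [← hp.card_eq_sup hF₀]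
  exact Finset.le_sup ((mem_del Δ v F₀).mpr ⟨hF₀.1, hvF₀⟩)

theorem sup_card_link {Δ : SC n} {v : Fin n} (hp : Δ.Pure) (hv : {v} ∈ Δ.faces) :
    (Δ.link v).faces.sup Finset.card + 1 = Δ.faces.sup Finset.card := by
  obtain ⟨F, hF, hvF⟩ := Δ.exists_isFacet_superset_s14 hv
  have hvF : v ∈ F := hvF (Finset.mem_singleton_self v)
  refine le_antisymm ?_ ?_
  · refine Nat.add_le_of_le_sub (Finset.card_pos.mpr ⟨v, hvF⟩ |>.trans_le
      (Finset.le_sup hF.1)) (Finset.sup_le fun G hG => ?_)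
    obtain ⟨-, hvG, hG⟩ := (mem_link_of_singleton_mem hv G).mp hG
    have := Finset.le_sup (f := Finset.card) hG
    rw [Finset.card_insert_of_notMem hvG] at this
    omega
  · have := Finset.le_sup (f := Finset.card) (erase_mem_link hF.1 hvF)
    rw [Finset.card_erase_of_mem hvF, hp.card_eq_sup hF] at this
    omega

theorem del_eq_self (Δ : SC n) {v : Fin n} (hv : {v} ∉ Δ.faces) : Δ.del v = Δ := by
  refine ext (Finset.ext fun G => ?_)
  rw [mem_del]
  exact ⟨And.left, fun hG => ⟨hG, fun hvG => hv (Δ.down G hG {v} (by simpa using hvG))⟩⟩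

end SC

theorem IsVD.pure {n : ℕ} {Δ : SC n} (h : IsVD Δ) : Δ.Pure := by
  cases h with
  | triv Δ h =>
    intro F G hF hG
    simp_all [SC.isFacet]
  | step Δ hp => exact hp

namespace SC

variable {n : ℕ} (K : Type*) [Field K]

/-- `H̃^{c-1}(Δ; K) = 0`, with cochains of size `c` modelled as functions on all finsets of which
only the values on faces matter. -/
def ExactAt (Δ : SC n) (c : ℕ) : Prop :=
  ∀ f : Finset (Fin n) → K, (∀ F ∈ Δ.faces, F.card = c + 1 → coboundary K f F = 0) →
    ∃ g, ∀ F ∈ Δ.faces, F.card = c → coboundary K g F = f F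

theorem exactAt_zero_of_singleton_mem {Δ : SC n} {x : Fin n} (hx : {x} ∈ Δ.faces) :
    Δ.ExactAt K 0 := by
  intro f hf
  refine ⟨0, fun F _ hF => ?_⟩
  rw [Finset.card_eq_zero] at hF
  subst hF
  have hfx := hf {x} hx (Finset.card_singleton x)
  rw [coboundary_apply, Finset.sum_singleton, Finset.erase_singleton,
    ← insertSign_erase_self, Finset.erase_singleton] at hfx
  simpa [insertSign, coboundary_apply] using hfx.symm

theorem IsCone.exactAt {Δ : SC n} {v : Fin n} (hc : Δ.IsCone v) (c : ℕ) : Δ.ExactAt K c := by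
  intro f hf
  refine ⟨coneHomotopy K v f, fun F hF hcard => ?_⟩
  have hcocycle : coneHomotopy K v (coboundary K f) F = 0 := by
    rw [coneHomotopy_apply]
    split_ifs with hvF
    · rfl
    · rw [hf _ (hc.insert_mem hF) (by rw [Finset.card_insert_of_notMem hvF, hcard]), mul_zero]
  simpa [hcocycle] using coboundary_coneHomotopy_add v f F

theorem exactAt_succ_of_del_link {Δ : SC n} {v : Fin n} (hv : {v} ∈ Δ.faces) {c : ℕ}
    (hd : (Δ.del v).ExactAt K (c + 1)) (hl : (Δ.link v).ExactAt K c) :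
    Δ.ExactAt K (c + 1) := by
  intro f hf
  obtain ⟨g₀, hg₀⟩ := hd f fun F hF => hf F ((mem_del Δ v F).mp hF).1
  set r := f - coboundary K g₀ with hr
  have hr_del : ∀ F ∈ Δ.faces, v ∉ F → F.card = c + 1 → r F = 0 := fun F hF hvF hcard => by
    rw [hr, Pi.sub_apply, hg₀ F ((mem_del Δ v F).mpr ⟨hF, hvF⟩) hcard, sub_self]
  have hr_cocycle : ∀ F ∈ Δ.faces, F.card = c + 1 + 1 → coboundary K r F = 0 := by
    rw [hr, map_sub, coboundary_coboundary, sub_zero]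
    exact hf
  obtain ⟨θ, hθ⟩ := hl (coneHomotopy K v r) fun H hH hcard => by
    obtain ⟨hHΔ, hvH, hvHΔ⟩ := (mem_link_of_singleton_mem hv H).mp hH
    have := coboundary_coneHomotopy_add v r H
    rwa [hr_del H hHΔ hvH hcard, coneHomotopy_apply, if_neg hvH,
      hr_cocycle _ hvHΔ (by rw [Finset.card_insert_of_notMem hvH, hcard]), mul_zero,
      add_zero] at this
  refine ⟨g₀ - vertexJoin K v θ, fun F hF hcard => ?_⟩
  rw [map_sub, Pi.sub_apply, coboundary_vertexJoin, sub_neg_eq_add, vertexJoin_apply]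
  split_ifs with hvF
  · rw [hθ _ (erase_mem_link hF hvF) (by rw [Finset.card_erase_of_mem hvF, hcard]; rfl),
      coneHomotopy_apply, if_neg (Finset.notMem_erase v F), Finset.insert_erase hvF,
      insertSign_erase_self, ← mul_assoc, insertSign_mul_self, one_mul, hr, Pi.sub_apply]
    ring
  · rw [hg₀ F ((mem_del Δ v F).mpr ⟨hF, hvF⟩) hcard, add_zero]

end SC

theorem IsVD.exactAt {n : ℕ} {Δ : SC n} (h : IsVD Δ) (K : Type*) [Field K] {c : ℕ}
    (hc : c < Δ.faces.sup Finset.card) : Δ.ExactAt K c := by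
  induction h generalizing c with
  | triv Δ h => simp [h] at hc
  | step Δ hp v hd hl ihd ihl =>
    by_cases hv : {v} ∈ Δ.faces
    swap
    · rw [Δ.del_eq_self hv] at ihd
      exact ihd hc
    by_cases hcone : Δ.IsCone v
    · exact hcone.exactAt K c
    obtain ⟨F₀, hF₀, hvF₀⟩ : ∃ F₀, Δ.isFacet F₀ ∧ v ∉ F₀ := by simpa [SC.IsCone] using hcone
    cases c with
    | zero => exact SC.exactAt_zero_of_singleton_mem K hv
    | succ c =>
      exact SC.exactAt_succ_of_del_link K hv (ihd (by rwa [SC.sup_card_del hp hF₀ hvF₀]))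
        (ihl (by have := SC.sup_card_link hp hv; omega))

theorem deltaLin_apply_eq_coboundary {n : ℕ} {Δ : SC n} {K : Type} [Field K] {s : ℕ}
    {φ : Cch Δ K s} {g : Finset (Fin n) → K} (hφg : ∀ F, φ F = g F.1)
    (F : {F // F ∈ Δ.faces ∧ F.card = s + 1}) :
    deltaLin Δ K s φ F = coboundary K g F.1 := by
  simp only [deltaLin, LinearMap.coe_mk, AddHom.coe_mk, coboundary_apply, hφg]
  exact Finset.sum_attach F.1 fun w => insertSign K w F.1 * g (F.1.erase w)

theorem SC.ExactAt.not_hredNe {n : ℕ} {Δ : SC n} {K : Type} [Field K] {i : ℕ}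
    (h : Δ.ExactAt K (i + 1)) : ¬ HredNe Δ K i := by
  rintro ⟨φ, hcocycle, hnot⟩
  set f : Finset (Fin n) → K := fun F => if hF : F ∈ Δ.faces ∧ F.card = i + 1 then φ ⟨F, hF⟩ else 0
  have hφf : ∀ F, φ F = f F.1 := fun F => by simp [f, F.2]
  obtain ⟨g, hg⟩ := h f fun F hF hcard => by
    rw [← deltaLin_apply_eq_coboundary hφf ⟨F, hF, hcard⟩, hcocycle, Pi.zero_apply]
  refine hnot (fun F => g F.1) (funext fun F => ?_)
  rw [deltaLin_apply_eq_coboundary (fun _ => rfl), hg F.1 F.2.1 F.2.2, hφf]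

namespace SC

variable {n : ℕ}

theorem mem_linkF (Δ : SC n) (S G : Finset (Fin n)) :
    G ∈ (Δ.linkF S).faces ↔ G = ∅ ∨ (G ∈ Δ.faces ∧ G ∩ S = ∅ ∧ G ∪ S ∈ Δ.faces) := by
  simp [SC.linkF]

theorem linkF_empty (Δ : SC n) : Δ.linkF ∅ = Δ := by
  refine ext (Finset.ext fun G => ?_)
  rw [mem_linkF]
  constructor
  · rintro (rfl | h)
    exacts [Δ.empty_mem, h.1]
  · exact fun h => Or.inr ⟨h, by simp, by simpa using h⟩

theorem linkF_of_notMem (Δ : SC n) {S : Finset (Fin n)} (hS : S ∉ Δ.faces) :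
    (Δ.linkF S).faces = {∅} := by
  ext G
  rw [mem_linkF, Finset.mem_singleton]
  exact ⟨fun h => h.resolve_right fun h => hS (Δ.down _ h.2.2 S Finset.subset_union_right),
    Or.inl⟩

theorem del_linkF (Δ : SC n) {S : Finset (Fin n)} {v : Fin n} (hvS : v ∉ S) :
    (Δ.linkF S).del v = (Δ.del v).linkF S := by
  refine ext (Finset.ext fun G => ?_)
  simp only [mem_del, mem_linkF, Finset.mem_union]
  aesop

theorem link_linkF (Δ : SC n) {S : Finset (Fin n)} {v : Fin n} (hvS : v ∉ S) :
    (Δ.linkF S).link v = (Δ.link v).linkF S := by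
  refine ext (Finset.ext fun G => ?_)
  simp only [mem_link, mem_linkF, Finset.insert_union]
  aesop

theorem linkF_eq_linkF_link (Δ : SC n) {S : Finset (Fin n)} {v : Fin n} (hvS : v ∈ S) :
    Δ.linkF S = (Δ.link v).linkF (S.erase v) := by
  refine ext (Finset.ext fun G => ?_)
  have hunion : insert v (G ∪ S.erase v) = G ∪ S := by
    rw [← Finset.union_insert, Finset.insert_erase hvS]
  have hinter : G ∩ S = ∅ ↔ v ∉ G ∧ G ∩ S.erase v = ∅ := by
    rw [← Finset.disjoint_iff_inter_eq_empty, ← Finset.disjoint_iff_inter_eq_empty]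
    conv_lhs => rw [← Finset.insert_erase hvS]
    exact Finset.disjoint_insert_right
  have hsub : insert v G ⊆ G ∪ S := Finset.insert_subset (Finset.mem_union_right G hvS)
    Finset.subset_union_left
  have hsub' : G ∪ S.erase v ⊆ G ∪ S := Finset.union_subset_union_right (Finset.erase_subset v S)
  simp only [mem_link, mem_linkF, hunion, hinter]
  have := Δ.down (G ∪ S)
  aesop

theorem Pure.card_add_card_eq_sup_of_isFacet_linkF {Δ : SC n} (hp : Δ.Pure)
    {S T : Finset (Fin n)} (hS : S ∈ Δ.faces) (hT : (Δ.linkF S).isFacet T) :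
    T.card + S.card = Δ.faces.sup Finset.card := by
  have hTS : T ∩ S = ∅ ∧ T ∪ S ∈ Δ.faces := by
    rcases (Δ.mem_linkF S T).mp hT.1 with rfl | ⟨-, hTS⟩
    exacts [⟨by simp, by simpa using hS⟩, hTS]
  obtain ⟨F, hF, hTSF⟩ := Δ.exists_isFacet_superset_s14 hTS.2
  have hSF : S ⊆ F := Finset.subset_union_right.trans hTSF
  have hFS : F \ S ∈ (Δ.linkF S).faces := by
    rw [mem_linkF, Finset.sdiff_inter_self, Finset.sdiff_union_of_subset hSF]
    exact Or.inr ⟨Δ.down F hF.1 _ Finset.sdiff_subset, rfl, hF.1⟩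
  have hTF : T ⊆ F \ S := Finset.subset_sdiff.mpr ⟨Finset.subset_union_left.trans hTSF,
    Finset.disjoint_iff_inter_eq_empty.mpr hTS.1⟩
  rw [hT.2 _ hFS hTF, Finset.card_sdiff_add_card_eq_card hSF, hp.card_eq_sup hF]

theorem Pure.linkF {Δ : SC n} (hp : Δ.Pure) {S : Finset (Fin n)} (hS : S ∈ Δ.faces) :
    (Δ.linkF S).Pure := fun T₁ T₂ h₁ h₂ => by
  have := hp.card_add_card_eq_sup_of_isFacet_linkF hS h₁
  have := hp.card_add_card_eq_sup_of_isFacet_linkF hS h₂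
  omega

end SC

theorem IsVD.linkF {n : ℕ} {Δ : SC n} (h : IsVD Δ) {S : Finset (Fin n)} (hS : S ∈ Δ.faces) :
    IsVD (Δ.linkF S) := by
  induction h generalizing S with
  | triv Δ h =>
    rw [h, Finset.mem_singleton] at hS
    rw [hS, Δ.linkF_empty]
    exact IsVD.triv Δ h
  | step Δ hp v hd hl ihd ihl =>
    by_cases hvS : v ∈ S
    · rw [Δ.linkF_eq_linkF_link hvS]
      exact ihl (SC.erase_mem_link hS hvS)
    refine IsVD.step _ (hp.linkF hS) v ?_ ?_
    · rw [Δ.del_linkF hvS]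
      exact ihd ((SC.mem_del Δ v S).mpr ⟨hS, hvS⟩)
    · rw [Δ.link_linkF hvS]
      by_cases hSl : S ∈ (Δ.link v).faces
      · exact ihl hSl
      · exact IsVD.triv _ ((Δ.link v).linkF_of_notMem hSl)

section ShellingOrder

variable {α : Type*}

/-- The complex `⟨F⟩ ∩ ⋃_{P ∈ Ls} ⟨P⟩` is pure of dimension `dim F - 1`. Stating
`G'.card + 1 = F.card` instead of `G'.card = F.card - 1` rules out `F = ∅` once `Ls` is nonempty:
this lets the condition survive coning, and forces shelling orders to be duplicate-free. -/
def AttachesInCodimOne (Ls : List (Finset α)) (F : Finset α) : Prop :=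
  ∀ G ⊆ F, (∃ P ∈ Ls, G ⊆ P) →
    ∃ G', G ⊆ G' ∧ G' ⊆ F ∧ G'.card + 1 = F.card ∧ ∃ P ∈ Ls, G' ⊆ P

def IsShellingOrder (L : List (Finset α)) : Prop :=
  ∀ k (hk : k < L.length), AttachesInCodimOne (L.take k) L[k]

theorem IsShellingOrder.nodup {L : List (Finset α)} (h : IsShellingOrder L) : L.Nodup := by
  refine List.pairwise_iff_getElem.mpr fun i k hi hk hik heq => ?_
  obtain ⟨G', hkG', hG'k, hcard, -⟩ := h k hk L[k] subset_rfl
    ⟨L[i], List.mem_take_iff_getElem.mpr ⟨i, by omega, rfl⟩, heq.ge⟩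
  rw [Finset.Subset.antisymm hG'k hkG'] at hcard
  omega

variable [DecidableEq α]

theorem AttachesInCodimOne.map_insert {Ls : List (Finset α)} {F : Finset α} {v : α}
    (h : AttachesInCodimOne Ls F) (hvF : v ∉ F) :
    AttachesInCodimOne (Ls.map (insert v)) (insert v F) := by
  rintro G hGF ⟨_, hPv, hGP⟩
  obtain ⟨P, hP, rfl⟩ := List.mem_map.mp hPv
  obtain ⟨H, hGH, hHF, hcard, Q, hQ, hHQ⟩ :=
    h _ (Finset.subset_insert_iff.mp hGF) ⟨P, hP, Finset.subset_insert_iff.mp hGP⟩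
  refine ⟨insert v H, Finset.subset_insert_iff.mpr hGH, Finset.insert_subset_insert v hHF, ?_,
    insert v Q, List.mem_map_of_mem hQ, Finset.insert_subset_insert v hHQ⟩
  rw [Finset.card_insert_of_notMem (fun hvH => hvF (hHF hvH)), Finset.card_insert_of_notMem hvF,
    hcard]

theorem AttachesInCodimOne.append_map_insert {L Ls : List (Finset α)} {F : Finset α} {v : α}
    (h : AttachesInCodimOne Ls F) (hvF : v ∉ F) (hvL : ∀ P ∈ L, v ∉ P) (hFL : ∃ P ∈ L, F ⊆ P) :
    AttachesInCodimOne (L ++ Ls.map (insert v)) (insert v F) := by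
  rintro G hGF ⟨P, hP, hGP⟩
  by_cases hvG : v ∈ G
  · have hP : P ∈ Ls.map (insert v) :=
      (List.mem_append.mp hP).resolve_left fun hP => hvL P hP (hGP hvG)
    obtain ⟨G', hGG', hG'F, hcard, Q, hQ, hG'Q⟩ := h.map_insert hvF G hGF ⟨P, hP, hGP⟩
    exact ⟨G', hGG', hG'F, hcard, Q, List.mem_append_right L hQ, hG'Q⟩
  · obtain ⟨Q, hQ, hFQ⟩ := hFL
    exact ⟨F, (Finset.subset_insert_iff_of_notMem hvG).mp hGF, Finset.subset_insert v F,
      (Finset.card_insert_of_notMem hvF).symm, Q, List.mem_append_left _ hQ, hFQ⟩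

theorem IsShellingOrder.map_insert {L : List (Finset α)} {v : α} (h : IsShellingOrder L)
    (hv : ∀ F ∈ L, v ∉ F) : IsShellingOrder (L.map (insert v)) := by
  intro k hk
  rw [List.length_map] at hk
  rw [← List.map_take, List.getElem_map]
  exact (h k hk).map_insert (hv _ (List.getElem_mem hk))

theorem IsShellingOrder.append_map_insert {L Ls : List (Finset α)} {v : α}
    (hL : IsShellingOrder L) (hLs : IsShellingOrder Ls) (hvL : ∀ P ∈ L, v ∉ P)
    (hvLs : ∀ F ∈ Ls, v ∉ F) (hLsL : ∀ F ∈ Ls, ∃ P ∈ L, F ⊆ P) :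
    IsShellingOrder (L ++ Ls.map (insert v)) := by
  intro k hk
  by_cases hkL : k < L.length
  · rw [List.take_append_of_le_length hkL.le, List.getElem_append_left hkL]
    exact hL k hkL
  · obtain ⟨j, rfl⟩ := Nat.exists_eq_add_of_le (not_lt.mp hkL)
    have hj : j < Ls.length := by simpa using hk
    rw [List.take_append, Nat.add_sub_cancel_left, List.take_of_length_le (by omega),
      List.getElem_append_right (Nat.le_add_right _ _), ← List.map_take]
    simp only [Nat.add_sub_cancel_left, List.getElem_map]
    exact (hLs j hj).append_map_insert (hvLs _ (List.getElem_mem hj)) hvL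
      (hLsL _ (List.getElem_mem hj))

end ShellingOrder

theorem shellable_of_isShellingOrder {n : ℕ} {Δ : SC n} {L : List (Finset (Fin n))}
    (hL : ∀ F, Δ.isFacet F ↔ F ∈ L) (h : IsShellingOrder L) : Shellable Δ := by
  refine ⟨L, h.nodup, hL, fun k hk _ G hGk ⟨i, hi, hik, hGi⟩ => ?_⟩
  obtain ⟨G', hGG', hG'k, hcard, P, hP, hG'P⟩ :=
    h k hk G hGk ⟨L[i], List.mem_take_iff_getElem.mpr ⟨i, by omega, rfl⟩, hGi⟩
  obtain ⟨j, hj, rfl⟩ := List.mem_take_iff_getElem.mp hP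
  exact ⟨G', hGG', hG'k, by simp only [List.get_eq_getElem]; omega, j, by omega, by omega, hG'P⟩

theorem IsVD.exists_isShellingOrder {n : ℕ} {Δ : SC n} (h : IsVD Δ) :
    ∃ L : List (Finset (Fin n)), (∀ F, Δ.isFacet F ↔ F ∈ L) ∧ IsShellingOrder L := by
  induction h with
  | triv Δ h =>
    refine ⟨[∅], fun F => ?_, fun k hk => ?_⟩
    · simp only [SC.isFacet, h, Finset.mem_singleton, List.mem_singleton]
      exact ⟨And.left, fun hF => ⟨hF, fun G hG _ => hF.trans hG.symm⟩⟩
    · obtain rfl : k = 0 := by simpa using hk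
      rintro G - ⟨P, hP, -⟩
      simp at hP
  | step Δ hp v hd hl ihd ihl =>
    by_cases hv : {v} ∈ Δ.faces
    swap
    · rwa [Δ.del_eq_self hv] at ihd
    obtain ⟨Ls, hLs, hLsh⟩ := ihl
    have hvLs : ∀ G ∈ Ls, v ∉ G := fun G hG =>
      ((SC.mem_link_of_singleton_mem hv G).mp ((hLs G).mpr hG).1).2.1
    have hmem := SC.mem_map_insert_iff hv hLs
    by_cases hcone : Δ.IsCone v
    · refine ⟨Ls.map (insert v), fun F => ?_, hLsh.map_insert hvLs⟩
      rw [hmem]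
      exact ⟨fun hF => ⟨hF, hcone F hF⟩, And.left⟩
    obtain ⟨F₀, hF₀, hvF₀⟩ : ∃ F₀, Δ.isFacet F₀ ∧ v ∉ F₀ := by simpa [SC.IsCone] using hcone
    obtain ⟨L, hL, hLsh'⟩ := ihd
    have hdel := SC.isFacet_del_iff hp hd.pure hF₀ hvF₀
    refine ⟨L ++ Ls.map (insert v), fun F => ?_, hLsh'.append_map_insert hLsh
      (fun P hP => ((hdel P).mp ((hL P).mpr hP)).2) hvLs fun G hG => ?_⟩
    · rw [List.mem_append, ← hL, hmem, hdel]
      tauto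
    · obtain ⟨hGΔ, hvG, -⟩ := (SC.mem_link_of_singleton_mem hv G).mp ((hLs G).mpr hG).1
      obtain ⟨D, hD, hGD⟩ :=
        (Δ.del v).exists_isFacet_superset_s14 ((SC.mem_del Δ v G).mpr ⟨hGΔ, hvG⟩)
      exact ⟨D, (hL D).mp hD, hGD⟩

/-- Every vertex decomposable complex is shellable, and hence
Cohen-Macaulay over every field (via Reisner's criterion). -/
theorem vd_shellable_CM {n : ℕ} (Δ : SC n) (h : IsVD Δ) :
    Shellable Δ ∧ ∀ (K : Type) [Field K], IsCM Δ K := by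
  obtain ⟨L, hL, hLsh⟩ := h.exists_isShellingOrder
  refine ⟨shellable_of_isShellingOrder hL hLsh, fun K _ F hF i hi => ?_⟩
  exact ((h.linkF hF).exactAt K (by rw [SC.dim] at hi; omega)).not_hredNe
end

section
/- Let Δ = Δ₁ ∪ Δ₂ be simplicial complexes on [n] such that S = Δ₁ ∩ Δ₂ is a simplex (the full power set of some subset of [n]) or empty. If for some j > 1 and σ ⊆ [n] the reduced cohomology H̃^{j−1}(Δ|_σ; K) is nonzero, then writing σ_i for the vertices of σ lying in Δ_i, either H̃^{j−1}(Δ₁|_{σ₁}; K) ≠ 0 or H̃^{j−1}(Δ₂|_{σ₂}; K) ≠ 0. -/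
open Finset

open scoped Classical

/-! Mayer–Vietoris at the level of cochains. Restricting to the vertices of `Δᵢ` in `σ` does not
change `Δᵢ|_σ`, so `Δ|_σ = Δ₁|_σ ∪ Δ₂|_σ` with intersection the simplex on `s ∩ σ`. If the
restrictions of a cocycle `φ` on `Δ|_σ` are coboundaries `δψ₁`, `δψ₂`, then `ψ₁ - ψ₂` is a cocycle
of positive degree on that simplex. A simplex is a cone, hence acyclic, so `ψ₁ - ψ₂ = δη`;
replacing `ψ₂` by `ψ₂ + δη` (with `η` extended by zero) makes the two primitives agree on the
overlap, and they glue to a primitive of `φ`. -/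

theorem Finset.sum_sum_erase_eq_zero_of_antisymm {α M : Type*} [DecidableEq α] [AddCommGroup M]
    (s : Finset α) {f : α → α → M} (hf : ∀ a ∈ s, ∀ b ∈ s, a ≠ b → f b a = -f a b) :
    ∑ a ∈ s, ∑ b ∈ s.erase a, f a b = 0 := by
  rw [← Finset.sum_finset_product' s.offDiag s (fun a => s.erase a)
    (by simp [Finset.mem_offDiag, and_comm, ne_comm])]
  refine Finset.sum_involution (fun p _ => p.swap) (fun p hp => ?_) (fun p hp _ => ?_)
    (fun p hp => ?_) (fun p _ => p.swap_swap) <;> obtain ⟨ha, hb, hab⟩ := Finset.mem_offDiag.mp hp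
  · simp [hf _ ha _ hb hab]
  · exact fun h => hab (congrArg Prod.fst h).symm
  · exact Finset.mem_offDiag.mpr ⟨hb, ha, hab.symm⟩

namespace SC

variable {n : ℕ}

def simplex (t : Finset (Fin n)) : SC n where
  faces := t.powerset
  down _ hF _ hG := Finset.mem_powerset.mpr (hG.trans (Finset.mem_powerset.mp hF))
  empty_mem := Finset.empty_mem_powerset t

theorem insert_mem_simplex {t : Finset (Fin n)} {v : Fin n} (hv : v ∈ t) {F : Finset (Fin n)}
    (hF : F ∈ (simplex t).faces) : insert v F ∈ (simplex t).faces :=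
  Finset.mem_powerset.mpr (Finset.insert_subset hv (Finset.mem_powerset.mp hF))

theorem ext_faces {Δ Δ' : SC n} (h : Δ.faces = Δ'.faces) : Δ = Δ' := by
  cases Δ
  cases Δ'
  congr

theorem restrict_filter_singleton_mem (Δ : SC n) (σ : Finset (Fin n)) :
    Δ.restrict (σ.filter fun w => ({w} : Finset (Fin n)) ∈ Δ.faces) = Δ.restrict σ := by
  refine ext_faces (Finset.filter_congr fun F hF => ⟨fun h => h.trans (Finset.filter_subset _ _),
    fun h w hw => Finset.mem_filter.mpr ⟨h hw, Δ.down F hF _ (Finset.singleton_subset_iff.mpr hw)⟩⟩)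

theorem restrict_faces_union {Δ Δ₁ Δ₂ : SC n} (h : Δ.faces = Δ₁.faces ∪ Δ₂.faces)
    (σ : Finset (Fin n)) :
    (Δ.restrict σ).faces = (Δ₁.restrict σ).faces ∪ (Δ₂.restrict σ).faces := by
  simp only [restrict, h, Finset.filter_union]

theorem restrict_faces_inter {Δ₁ Δ₂ : SC n} {t : Finset (Fin n)}
    (h : Δ₁.faces ∩ Δ₂.faces = t.powerset) (σ : Finset (Fin n)) :
    (Δ₁.restrict σ).faces ∩ (Δ₂.restrict σ).faces = (t ∩ σ).powerset := by
  ext F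
  simp only [restrict, ← Finset.filter_inter_distrib, h, Finset.mem_filter, Finset.mem_powerset,
    Finset.subset_inter_iff]

end SC

section Cochains

variable {n : ℕ} {K : Type} [Field K]

variable (K) in
def faceSign (F : Finset (Fin n)) (w : Fin n) : K :=
  (-1) ^ (F.filter (fun u => u < w)).card

def extendByZero {Δ : SC n} {s : ℕ} (φ : Cch Δ K s) (G : Finset (Fin n)) : K :=
  if h : G ∈ Δ.faces ∧ G.card = s then φ ⟨G, h⟩ else 0

theorem extendByZero_of_mem {Δ : SC n} {s : ℕ} (φ : Cch Δ K s) {G : Finset (Fin n)}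
    (h : G ∈ Δ.faces ∧ G.card = s) : extendByZero φ G = φ ⟨G, h⟩ :=
  dif_pos h

theorem extendByZero_of_card_ne {Δ : SC n} {s : ℕ} (φ : Cch Δ K s) {G : Finset (Fin n)}
    (h : G.card ≠ s) : extendByZero φ G = 0 :=
  dif_neg fun h' => h h'.2

theorem deltaLin_apply {Δ : SC n} {s : ℕ} (φ : Cch Δ K s)
    (F : {F : Finset (Fin n) // F ∈ Δ.faces ∧ F.card = s + 1}) :
    deltaLin Δ K s φ F = ∑ w ∈ F.1, faceSign K F.1 w * extendByZero φ (F.1.erase w) := by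
  rw [← Finset.sum_attach F.1]
  refine Finset.sum_congr rfl fun w _ => ?_
  rw [extendByZero_of_mem]
  rfl

theorem faceSign_erase {F : Finset (Fin n)} {w : Fin n} (hw : w ∈ F) (v : Fin n) :
    faceSign K (F.erase w) v = (if w < v then -1 else 1) * faceSign K F v := by
  unfold faceSign
  rw [Finset.filter_erase]
  split_ifs with hwv
  · rw [← Finset.card_erase_add_one (Finset.mem_filter.mpr ⟨hw, hwv⟩), pow_succ]
    ring
  · rw [Finset.erase_eq_of_notMem (s := F.filter (fun u => u < v))
      fun h => hwv (Finset.mem_filter.mp h).2, one_mul]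

theorem faceSign_mul_self (F : Finset (Fin n)) (w : Fin n) :
    faceSign K F w * faceSign K F w = 1 := by
  rw [faceSign, ← pow_add, Even.neg_one_pow ⟨_, rfl⟩]

theorem deltaLin_deltaLin {Δ : SC n} {s : ℕ} (φ : Cch Δ K s) :
    deltaLin Δ K (s + 1) (deltaLin Δ K s φ) = 0 := by
  funext F
  have hface : ∀ w ∈ F.1, F.1.erase w ∈ Δ.faces ∧ (F.1.erase w).card = s + 1 := fun w hw =>
    ⟨Δ.down _ F.2.1 _ (Finset.erase_subset _ _), by rw [Finset.card_erase_of_mem hw, F.2.2]; rfl⟩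
  have hexpand : ∀ w ∈ F.1, faceSign K F.1 w * extendByZero (deltaLin Δ K s φ) (F.1.erase w) =
      ∑ u ∈ F.1.erase w, faceSign K F.1 w * faceSign K (F.1.erase w) u *
        extendByZero φ ((F.1.erase w).erase u) := fun w hw => by
    rw [extendByZero_of_mem _ (hface w hw), deltaLin_apply, Finset.mul_sum]
    simp only [mul_assoc]
  rw [deltaLin_apply, Finset.sum_congr rfl hexpand]
  refine Finset.sum_sum_erase_eq_zero_of_antisymm F.1 fun w hw u hu hwu => ?_
  rw [Finset.erase_right_comm, faceSign_erase hw, faceSign_erase hu]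
  rcases hwu.lt_or_gt with h | h <;> simp only [if_pos h, if_neg h.not_gt] <;> ring

def restrictCochain {Δ' Δ : SC n} (hsub : Δ'.faces ⊆ Δ.faces) {s : ℕ} (φ : Cch Δ K s) :
    Cch Δ' K s :=
  fun G => φ ⟨G.1, hsub G.2.1, G.2.2⟩

theorem extendByZero_restrictCochain {Δ' Δ : SC n} (hsub : Δ'.faces ⊆ Δ.faces) {s : ℕ}
    (φ : Cch Δ K s) {G : Finset (Fin n)} (hG : G ∈ Δ'.faces) :
    extendByZero (restrictCochain hsub φ) G = extendByZero φ G := by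
  by_cases hc : G.card = s
  · rw [extendByZero_of_mem _ ⟨hG, hc⟩, extendByZero_of_mem _ ⟨hsub hG, hc⟩]
    rfl
  · rw [extendByZero_of_card_ne _ hc, extendByZero_of_card_ne _ hc]

theorem deltaLin_restrictCochain {Δ' Δ : SC n} (hsub : Δ'.faces ⊆ Δ.faces) {s : ℕ}
    (φ : Cch Δ K s) :
    deltaLin Δ' K s (restrictCochain hsub φ) = restrictCochain hsub (deltaLin Δ K s φ) := by
  funext F
  rw [restrictCochain, deltaLin_apply, deltaLin_apply]
  refine Finset.sum_congr rfl fun w _ => ?_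
  rw [extendByZero_restrictCochain _ _ (Δ'.down _ F.2.1 _ (Finset.erase_subset _ _))]

theorem exists_restrictCochain_eq {P Δ : SC n} (hsub : P.faces ⊆ Δ.faces) {s : ℕ}
    (η : Cch P K s) : ∃ η' : Cch Δ K s, restrictCochain hsub η' = η :=
  ⟨fun G => extendByZero η G.1, funext fun G => extendByZero_of_mem η G.2⟩

theorem eq_of_restrictCochain_eq {A B U : SC n} (hA : A.faces ⊆ U.faces)
    (hB : B.faces ⊆ U.faces) (hcover : ∀ F ∈ U.faces, F ∈ A.faces ∨ F ∈ B.faces)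
    {s : ℕ} {φ φ' : Cch U K s}
    (hφA : restrictCochain hA φ = restrictCochain hA φ')
    (hφB : restrictCochain hB φ = restrictCochain hB φ') : φ = φ' := by
  funext F
  rcases hcover F.1 F.2.1 with hF | hF
  · exact congrFun hφA ⟨F.1, hF, F.2.2⟩
  · exact congrFun hφB ⟨F.1, hF, F.2.2⟩

theorem exists_restrictCochain_eq_of_cover {A B U P : SC n} (hA : A.faces ⊆ U.faces)
    (hB : B.faces ⊆ U.faces) (hcover : ∀ F ∈ U.faces, F ∈ A.faces ∨ F ∈ B.faces)
    (hPA : P.faces ⊆ A.faces) (hPB : P.faces ⊆ B.faces)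
    (hAB : ∀ F ∈ A.faces, F ∈ B.faces → F ∈ P.faces) {s : ℕ}
    {ψA : Cch A K s} {ψB : Cch B K s} (h : restrictCochain hPA ψA = restrictCochain hPB ψB) :
    ∃ ψ : Cch U K s, restrictCochain hA ψ = ψA ∧ restrictCochain hB ψ = ψB := by
  refine ⟨fun F => if hF : F.1 ∈ A.faces then ψA ⟨F.1, hF, F.2.2⟩ else ψB
    ⟨F.1, (hcover F.1 F.2.1).resolve_left hF, F.2.2⟩, funext fun F => ?_, funext fun F => ?_⟩
  · exact dif_pos F.2.1
  · by_cases hFA : F.1 ∈ A.faces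
    · simp only [restrictCochain, dif_pos hFA]
      exact congrFun h ⟨F.1, hAB F.1 hFA F.2.1, F.2.2⟩
    · exact dif_neg hFA

-- the contracting homotopy of a cone with apex `v`: `G ↦ ±χ (G ∪ {v})`
def coneCochain {Δ : SC n} (v : Fin n) {s : ℕ} (χ : Cch Δ K (s + 1)) : Cch Δ K s :=
  fun G => faceSign K G.1 v * extendByZero χ (insert v G.1)

theorem extendByZero_coneCochain {Δ : SC n} (v : Fin n) {s : ℕ} (χ : Cch Δ K (s + 1))
    (F : {F : Finset (Fin n) // F ∈ Δ.faces ∧ F.card = s + 1}) {w : Fin n} (hw : w ∈ F.1) :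
    extendByZero (coneCochain v χ) (F.1.erase w) =
      faceSign K (F.1.erase w) v * extendByZero χ (insert v (F.1.erase w)) :=
  extendByZero_of_mem _
    ⟨Δ.down _ F.2.1 _ (Finset.erase_subset _ _), by rw [Finset.card_erase_of_mem hw, F.2.2]; rfl⟩

theorem deltaLin_coneCochain_of_mem {Δ : SC n} {v : Fin n} {s : ℕ} (χ : Cch Δ K (s + 1))
    (F : {F : Finset (Fin n) // F ∈ Δ.faces ∧ F.card = s + 1}) (hv : v ∈ F.1) :
    deltaLin Δ K s (coneCochain v χ) F = χ F := by
  rw [deltaLin_apply, Finset.sum_eq_single_of_mem v hv fun w hw hwv => ?_]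
  · rw [extendByZero_coneCochain v χ F hv, Finset.insert_erase hv, extendByZero_of_mem χ F.2,
      faceSign_erase hv, if_neg (lt_irrefl v), one_mul, ← mul_assoc, faceSign_mul_self, one_mul]
  -- `insert v` does not enlarge `F.erase w`, so it has the wrong size for `χ`
  rw [extendByZero_coneCochain v χ F hw,
    Finset.insert_eq_of_mem (Finset.mem_erase.mpr ⟨hwv.symm, hv⟩),
    extendByZero_of_card_ne χ (by rw [Finset.card_erase_of_mem hw, F.2.2]; omega), mul_zero,
    mul_zero]

theorem deltaLin_coneCochain_of_notMem {Δ : SC n} {v : Fin n} {s : ℕ} (χ : Cch Δ K (s + 1))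
    (F : {F : Finset (Fin n) // F ∈ Δ.faces ∧ F.card = s + 1}) (hv : v ∉ F.1)
    (hvF : insert v F.1 ∈ Δ.faces) :
    deltaLin Δ K s (coneCochain v χ) F = χ F - faceSign K F.1 v *
      deltaLin Δ K (s + 1) χ
        ⟨insert v F.1, hvF, by rw [Finset.card_insert_of_notMem hv, F.2.2]⟩ := by
  have hsign : faceSign K (insert v F.1) v = faceSign K F.1 v := by
    simpa [hv] using (faceSign_erase (K := K) (Finset.mem_insert_self v F.1) v).symm
  have hterm : ∀ w ∈ F.1, faceSign K F.1 w * extendByZero (coneCochain v χ) (F.1.erase w) =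
      -(faceSign K F.1 v * (faceSign K (insert v F.1) w *
        extendByZero χ ((insert v F.1).erase w))) := fun w hw => by
    have hwv : w ≠ v := ne_of_mem_of_not_mem hw hv
    have hF : F.1 = (insert v F.1).erase v := (Finset.erase_insert hv).symm
    rw [extendByZero_coneCochain v χ F hw, faceSign_erase hw, ← Finset.erase_insert_of_ne hwv.symm]
    nth_rw 1 [hF]
    rw [faceSign_erase (Finset.mem_insert_self v F.1)]
    rcases hwv.lt_or_gt with h | h <;> simp only [if_pos h, if_neg h.not_gt] <;> ring
  rw [deltaLin_apply, deltaLin_apply, Finset.sum_congr rfl hterm, Finset.sum_neg_distrib,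
    ← Finset.mul_sum, Finset.sum_insert hv, Finset.erase_insert hv, extendByZero_of_mem χ F.2,
    hsign, mul_add, ← mul_assoc, faceSign_mul_self]
  ring

theorem deltaLin_coneCochain {Δ : SC n} {v : Fin n} (hcone : ∀ F ∈ Δ.faces, insert v F ∈ Δ.faces)
    {s : ℕ} {χ : Cch Δ K (s + 1)} (hχ : deltaLin Δ K (s + 1) χ = 0) :
    deltaLin Δ K s (coneCochain v χ) = χ := by
  funext F
  by_cases hv : v ∈ F.1
  · exact deltaLin_coneCochain_of_mem χ F hv
  · rw [deltaLin_coneCochain_of_notMem χ F hv (hcone F.1 F.2.1), hχ, Pi.zero_apply, mul_zero,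
      sub_zero]

theorem exists_deltaLin_eq_of_simplex (t : Finset (Fin n)) {s : ℕ}
    {χ : Cch (SC.simplex t) K (s + 1)} (hχ : deltaLin (SC.simplex t) K (s + 1) χ = 0) :
    ∃ η : Cch (SC.simplex t) K s, deltaLin (SC.simplex t) K s η = χ := by
  obtain rfl | ⟨v, hv⟩ := t.eq_empty_or_nonempty
  · -- the only face of the empty simplex is `∅`, so there are no cochains of positive size
    refine ⟨0, funext fun F => absurd F.2.2 ?_⟩
    have hF : F.1 ⊆ ∅ := Finset.mem_powerset.mp F.2.1
    simp [Finset.subset_empty.mp hF]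
  · exact ⟨coneCochain v χ, deltaLin_coneCochain (fun F => SC.insert_mem_simplex hv) hχ⟩

theorem exists_deltaLin_eq_of_union {A B U : SC n} (hU : U.faces = A.faces ∪ B.faces)
    {t : Finset (Fin n)} (hAB : A.faces ∩ B.faces = t.powerset) {s : ℕ}
    (hAexact : ∀ φ : Cch A K (s + 1 + 1), deltaLin A K (s + 1 + 1) φ = 0 →
      ∃ ψ, deltaLin A K (s + 1) ψ = φ)
    (hBexact : ∀ φ : Cch B K (s + 1 + 1), deltaLin B K (s + 1 + 1) φ = 0 →
      ∃ ψ, deltaLin B K (s + 1) ψ = φ)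
    {φ : Cch U K (s + 1 + 1)} (hφ : deltaLin U K (s + 1 + 1) φ = 0) :
    ∃ ψ, deltaLin U K (s + 1) ψ = φ := by
  have hA : A.faces ⊆ U.faces := hU ▸ Finset.subset_union_left
  have hB : B.faces ⊆ U.faces := hU ▸ Finset.subset_union_right
  have hcover : ∀ F ∈ U.faces, F ∈ A.faces ∨ F ∈ B.faces := fun F hF =>
    Finset.mem_union.mp (hU ▸ hF)
  replace hAB : A.faces ∩ B.faces = (SC.simplex t).faces := hAB
  have hPA : (SC.simplex t).faces ⊆ A.faces := hAB ▸ Finset.inter_subset_left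
  have hPB : (SC.simplex t).faces ⊆ B.faces := hAB ▸ Finset.inter_subset_right
  have hAB' : ∀ F ∈ A.faces, F ∈ B.faces → F ∈ (SC.simplex t).faces := fun F hFA hFB =>
    hAB ▸ Finset.mem_inter.mpr ⟨hFA, hFB⟩
  obtain ⟨ψA, hψA⟩ := hAexact (restrictCochain hA φ) (by rw [deltaLin_restrictCochain, hφ]; rfl)
  obtain ⟨ψB, hψB⟩ := hBexact (restrictCochain hB φ) (by rw [deltaLin_restrictCochain, hφ]; rfl)
  -- the two primitives differ on the simplex `A ∩ B` by a cocycle, hence by a coboundary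
  obtain ⟨η, hη⟩ := exists_deltaLin_eq_of_simplex t
    (χ := restrictCochain hPA ψA - restrictCochain hPB ψB) (by
      rw [map_sub, deltaLin_restrictCochain, deltaLin_restrictCochain, hψA, hψB]
      exact sub_self _)
  obtain ⟨η', rfl⟩ := exists_restrictCochain_eq hPB η
  obtain ⟨ψ, hψA', hψB'⟩ := exists_restrictCochain_eq_of_cover hA hB hcover hPA hPB hAB'
    (ψB := ψB + deltaLin B K s η') (by
      show _ = restrictCochain hPB ψB + restrictCochain hPB (deltaLin B K s η')
      rw [← deltaLin_restrictCochain hPB, hη, add_sub_cancel])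
  refine ⟨ψ, eq_of_restrictCochain_eq hA hB hcover ?_ ?_⟩
  · rw [← deltaLin_restrictCochain, hψA', hψA]
  · rw [← deltaLin_restrictCochain, hψB', map_add, deltaLin_deltaLin, add_zero, hψB]

theorem not_hredNe_iff {Δ : SC n} {j : ℕ} :
    ¬ HredNe Δ K j ↔ ∀ φ : Cch Δ K (j + 1), deltaLin Δ K (j + 1) φ = 0 →
      ∃ ψ, deltaLin Δ K j ψ = φ := by
  simp [HredNe]

theorem HredNe.left_or_right_of_union {A B U : SC n} (hU : U.faces = A.faces ∪ B.faces)
    {t : Finset (Fin n)} (hAB : A.faces ∩ B.faces = t.powerset) {s : ℕ}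
    (h : HredNe U K (s + 1)) : HredNe A K (s + 1) ∨ HredNe B K (s + 1) := by
  by_contra! hne
  obtain ⟨φ, hφ, hφne⟩ := h
  obtain ⟨ψ, hψ⟩ := exists_deltaLin_eq_of_union hU hAB (not_hredNe_iff.mp hne.1)
    (not_hredNe_iff.mp hne.2) hφ
  exact hφne ψ hψ

end Cochains

/-- Mayer–Vietoris: if `Δ = Δ₁ ∪ Δ₂` with `Δ₁ ∩ Δ₂` a simplex (or
empty), `j > 1`, and `H̃^{j-1}(Δ|_σ; K) ≠ 0`, then `H̃^{j-1}(Δ₁|_{σ₁}; K) ≠ 0` or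
`H̃^{j-1}(Δ₂|_{σ₂}; K) ≠ 0`, where `σ_i` is the set of vertices of `σ` lying in `Δ_i`. -/
theorem mayer_vietoris_restriction {n : ℕ} (K : Type) [Field K] (Δ Δ₁ Δ₂ : SC n)
    (hunion : Δ.faces = Δ₁.faces ∪ Δ₂.faces)
    (hS : ∃ s : Finset (Fin n), Δ₁.faces ∩ Δ₂.faces = s.powerset)
    (j : ℕ) (hj : 1 < j) (σ : Finset (Fin n))
    (h : HredNe (Δ.restrict σ) K (j - 1)) :
    HredNe (Δ₁.restrict (σ.filter (fun w => ({w} : Finset (Fin n)) ∈ Δ₁.faces))) K (j - 1) ∨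
    HredNe (Δ₂.restrict (σ.filter (fun w => ({w} : Finset (Fin n)) ∈ Δ₂.faces))) K (j - 1) := by
  obtain ⟨s, hs⟩ := hS
  obtain ⟨k, rfl⟩ : ∃ k, j = k + 2 := ⟨j - 2, by omega⟩
  rw [SC.restrict_filter_singleton_mem, SC.restrict_filter_singleton_mem]
  exact HredNe.left_or_right_of_union (SC.restrict_faces_union hunion σ)
    (SC.restrict_faces_inter hs σ) h
end
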